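/- arXiv:1308.3200 — 9 statements merged into one kernel-verified Lean document; each statement's English description precedes it below -/
import Mathlib

section
/- Let C be a nonempty code of length n over a finite alphabet Q of size q ≥ 2 such that any two distinct codewords are at Hamming distance at least d, and suppose C is r-locally recoverable. Then for every positive integer t with t·(r+1) ≤ n and q^(t·r) ≤ |C|, there exists a code C' of length n − t·(r+1) over Q such that any two distinct codewords of C' are at Hamming distance at least d, and |C'| · q^(t·r) ≥ |C|. (This is the cardinality form of the bound k ≤ min over t of [t·r + k_opt^(q)(n − t(r+1), d)].) -/
/-!
Enlarging a set `S` of coordinates by a coordinate `i` together with a recovery set `R` of `i`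
multiplies the number of distinct restrictions of `C` to `S` by at most `q ^ r`: the coordinates
of `R` outside `S` contribute at most `q ^ r` patterns, and `i` contributes none since it is
determined by `R`. After `t` such steps, padded so that each adds exactly `r + 1` coordinates,
`S` has `t (r + 1)` coordinates and `C` has at most `q ^ (t r)` restrictions to it, so by
pigeonhole some fibre of the restriction map has at least `|C| / q ^ (t r)` codewords. Codewords
in one fibre agree on `S`, so deleting the coordinates of `S` preserves their Hamming distances.
-/

open Finset Function

theorem Finset.card_image_le_card_image_of_eq_imp_eq {α β γ : Type*} [DecidableEq β]
    [DecidableEq γ] {s : Finset α} {f : α → β} {g : α → γ}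
    (h : ∀ x ∈ s, ∀ y ∈ s, f x = f y → g x = g y) : #(s.image g) ≤ #(s.image f) := by
  calc #(s.image g) = #((s.image fun x => (f x, g x)).image Prod.snd) := by
        rw [image_image]; rfl
    _ ≤ #(s.image fun x => (f x, g x)) := card_image_le
    _ = #((s.image fun x => (f x, g x)).image Prod.fst) := by
        refine (card_image_of_injOn ?_).symm
        simp only [Set.InjOn, coe_image, Set.mem_image, mem_coe]
        rintro _ ⟨x, hx, rfl⟩ _ ⟨y, hy, rfl⟩ hxy
        simp only [Prod.mk.injEq] at hxy ⊢
        exact ⟨hxy, h x hx y hy hxy⟩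
    _ = #(s.image f) := by rw [image_image]; rfl

theorem Finset.exists_card_le_mul_card_fiber {α β : Type*} [DecidableEq β] {s : Finset α}
    (hs : s.Nonempty) (f : α → β) :
    ∃ y ∈ s.image f, #s ≤ #(s.image f) * #{x ∈ s | f x = y} := by
  have hpos : (0 : ℚ) < #(s.image f) := by exact_mod_cast (hs.image f).card_pos
  obtain ⟨y, hy, hfiber⟩ := exists_le_card_fiber_of_nsmul_le_card_of_maps_to
    (fun x hx => mem_image_of_mem f hx) (hs.image f) (b := (#s : ℚ) / #(s.image f))
    (by rw [nsmul_eq_mul, mul_div_cancel₀ _ hpos.ne'])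
  refine ⟨y, hy, ?_⟩
  rw [div_le_iff₀ hpos] at hfiber
  exact_mod_cast hfiber.trans_eq (mul_comm _ _)

theorem hammingDist_comp_eq_of_injective {ι κ β : Type*} [Fintype ι] [Fintype κ] [DecidableEq β]
    {e : κ → ι} (he : Injective e) {x y : ι → β} (h : ∀ i, x i ≠ y i → i ∈ Set.range e) :
    hammingDist (x ∘ e) (y ∘ e) = hammingDist x y := by
  refine card_nbij e (fun j hj => by simpa using hj) he.injOn ?_
  intro i hi
  obtain ⟨j, rfl⟩ := h i (by simpa using hi)
  exact ⟨j, by simpa using hi, rfl⟩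

section Restriction

variable {ι Q : Type*} [DecidableEq Q] {C : Finset (ι → Q)}

theorem card_image_restrict_le_of_eqOn {S T : Finset ι}
    (h : ∀ X ∈ C, ∀ Y ∈ C, Set.EqOn X Y S → Set.EqOn X Y T) :
    #(C.image T.restrict) ≤ #(C.image S.restrict) := by
  refine card_image_le_card_image_of_eq_imp_eq fun X hX Y hY hXY => ?_
  have hT := h X hX Y hY fun i hi => congrFun hXY ⟨i, hi⟩
  exact funext fun i => hT i.2

variable [DecidableEq ι]

theorem card_image_restrict_insert_le {i : ι} {R S : Finset ι}
    (hR : ∀ X ∈ C, ∀ Y ∈ C, X i ≠ Y i → ∃ j ∈ R, X j ≠ Y j) (hRS : R ⊆ S) :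
    #(C.image (insert i S).restrict) ≤ #(C.image S.restrict) := by
  refine card_image_restrict_le_of_eqOn fun X hX Y hY hXY j hj => ?_
  rcases mem_insert.mp hj with rfl | hj
  · by_contra hi
    obtain ⟨k, hk, hXYk⟩ := hR X hX Y hY hi
    exact hXYk (hXY (hRS hk))
  · exact hXY hj

variable [Fintype Q]

theorem card_image_restrict_union_le (S T : Finset ι) :
    #(C.image (S ∪ T).restrict) ≤ #(C.image S.restrict) * Fintype.card Q ^ #T := by
  calc #(C.image (S ∪ T).restrict)
      ≤ #(C.image fun X => (S.restrict X, T.restrict X)) := by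
        refine card_image_le_card_image_of_eq_imp_eq fun X _ Y _ hXY => funext fun i => ?_
        simp only [Prod.mk.injEq, funext_iff, Subtype.forall, restrict] at hXY
        rcases mem_union.mp i.2 with hi | hi
        exacts [hXY.1 i hi, hXY.2 i hi]
    _ ≤ #(C.image S.restrict ×ˢ (univ : Finset (T → Q))) :=
        card_le_card fun p hp => by
          obtain ⟨X, hX, rfl⟩ := mem_image.mp hp
          exact mem_product.mpr ⟨mem_image_of_mem _ hX, mem_univ _⟩
    _ = #(C.image S.restrict) * Fintype.card Q ^ #T := by
        rw [card_product, card_univ, Fintype.card_fun, Fintype.card_coe]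

variable [Fintype ι] {r : ℕ}

theorem exists_card_eq_add_card_image_restrict_le
    (hloc : ∀ i : ι, ∃ R : Finset ι, i ∉ R ∧ #R = r ∧
      ∀ X ∈ C, ∀ Y ∈ C, X i ≠ Y i → ∃ j ∈ R, X j ≠ Y j) {S : Finset ι}
    (hS : #S + (r + 1) ≤ Fintype.card ι) :
    ∃ S' : Finset ι, #S' = #S + (r + 1) ∧
      #(C.image S'.restrict) ≤ #(C.image S.restrict) * Fintype.card Q ^ r := by
  obtain ⟨i, -, hiS⟩ :=
    exists_mem_notMem_of_card_lt_card (s := S) (t := univ) (by rw [card_univ]; omega)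
  obtain ⟨R, hiR, hRcard, hR⟩ := hloc i
  obtain ⟨U, hSRU, hUi, hUcard⟩ := exists_subsuperset_card_eq (s := S ∪ R) (t := {i}ᶜ)
    (n := #S + r) (fun j hj => mem_compl.mpr fun hji => by
      rw [mem_singleton.mp hji] at hj
      exact (mem_union.mp hj).elim hiS hiR)
    ((card_union_le S R).trans_eq (by rw [hRcard]))
    (by rw [card_compl, card_singleton]; omega)
  have hiU : i ∉ U := fun h => by simpa using hUi h
  have hSU : S ⊆ U := subset_union_left.trans hSRU
  refine ⟨insert i U, by rw [card_insert_of_notMem hiU, hUcard, add_assoc], ?_⟩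
  calc #(C.image (insert i U).restrict)
      ≤ #(C.image U.restrict) := card_image_restrict_insert_le hR (subset_union_right.trans hSRU)
    _ = #(C.image (S ∪ (U \ S)).restrict) := by rw [union_sdiff_of_subset hSU]
    _ ≤ #(C.image S.restrict) * Fintype.card Q ^ #(U \ S) := card_image_restrict_union_le _ _
    _ = #(C.image S.restrict) * Fintype.card Q ^ r := by
        rw [card_sdiff_of_subset hSU, hUcard, Nat.add_sub_cancel_left]

theorem exists_card_eq_mul_card_image_restrict_le
    (hloc : ∀ i : ι, ∃ R : Finset ι, i ∉ R ∧ #R = r ∧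
      ∀ X ∈ C, ∀ Y ∈ C, X i ≠ Y i → ∃ j ∈ R, X j ≠ Y j) {k : ℕ}
    (hk : k * (r + 1) ≤ Fintype.card ι) :
    ∃ S : Finset ι, #S = k * (r + 1) ∧ #(C.image S.restrict) ≤ Fintype.card Q ^ (k * r) := by
  induction k with
  | zero => exact ⟨∅, by simp, by simpa using card_le_one_of_subsingleton _⟩
  | succ k ih =>
    obtain ⟨S, hScard, hS⟩ := ih (by nlinarith)
    obtain ⟨S', hS'card, hS'⟩ :=
      exists_card_eq_add_card_image_restrict_le hloc (S := S) (by rw [hScard]; linarith)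
    refine ⟨S', by rw [hS'card, hScard]; ring, hS'.trans ?_⟩
    calc #(C.image S.restrict) * Fintype.card Q ^ r
        ≤ Fintype.card Q ^ (k * r) * Fintype.card Q ^ r := Nat.mul_le_mul_right _ hS
      _ = Fintype.card Q ^ ((k + 1) * r) := by ring

end Restriction

theorem exists_puncture_hammingDist_eq {ι Q : Type*} [Fintype ι] [DecidableEq ι] [DecidableEq Q]
    {F : Finset (ι → Q)} {S : Finset ι} (hF : ∀ X ∈ F, ∀ Y ∈ F, Set.EqOn X Y S) {m : ℕ}
    (hm : #Sᶜ = m) :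
    ∃ φ : (ι → Q) → (Fin m → Q), ∀ X ∈ F, ∀ Y ∈ F, hammingDist (φ X) (φ Y) = hammingDist X Y := by
  let e : (Sᶜ : Finset ι) ≃ Fin m := Fintype.equivFinOfCardEq (by rw [Fintype.card_coe, hm])
  refine ⟨(· ∘ Subtype.val ∘ e.symm), fun X hX Y hY =>
    hammingDist_comp_eq_of_injective (Subtype.val_injective.comp e.symm.injective) fun i hi => ?_⟩
  have hiS : i ∈ Sᶜ := mem_compl.mpr fun h => hi (hF X hX Y hY h)
  exact ⟨e ⟨i, hiS⟩, by simp⟩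

theorem stmt_0_general (n q d r : ℕ)
    (Q : Type) [Fintype Q] [DecidableEq Q] (hcard : Fintype.card Q = q)
    (C : Finset (Fin n → Q)) (hC : C.Nonempty)
    (hdist : ∀ X ∈ C, ∀ Y ∈ C, X ≠ Y → d ≤ hammingDist X Y)
    (hloc : ∀ i : Fin n, ∃ R : Finset (Fin n), i ∉ R ∧ R.card = r ∧
      ∀ X ∈ C, ∀ Y ∈ C, X i ≠ Y i → ∃ j ∈ R, X j ≠ Y j)
    (t : ℕ) (htn : t * (r + 1) ≤ n) :
    ∃ C' : Finset (Fin (n - t * (r + 1)) → Q), C'.Nonempty ∧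
      (∀ X ∈ C', ∀ Y ∈ C', X ≠ Y → d ≤ hammingDist X Y) ∧
      C.card ≤ C'.card * q ^ (t * r) := by
  subst hcard
  obtain ⟨S, hScard, hSimage⟩ :=
    exists_card_eq_mul_card_image_restrict_le hloc (k := t) (by simpa using htn)
  obtain ⟨v, hv, hfiber⟩ := exists_card_le_mul_card_fiber hC S.restrict
  set F := {X ∈ C | S.restrict X = v}
  have hFne : F.Nonempty := by
    obtain ⟨X, hX⟩ := mem_image.mp hv
    exact ⟨X, mem_filter.mpr hX⟩
  have hFC : F ⊆ C := filter_subset _ _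
  have hFagree : ∀ X ∈ F, ∀ Y ∈ F, Set.EqOn X Y S := fun X hX Y hY i hi =>
    congrFun ((mem_filter.mp hX).2.trans (mem_filter.mp hY).2.symm) ⟨i, hi⟩
  obtain ⟨φ, hφ⟩ := exists_puncture_hammingDist_eq hFagree
    (m := n - t * (r + 1)) (by rw [card_compl, hScard, Fintype.card_fin])
  have hφinj : Set.InjOn φ F := fun X hX Y hY hXY =>
    hammingDist_eq_zero.mp ((hφ X hX Y hY).symm.trans (hammingDist_eq_zero.mpr hXY))
  refine ⟨F.image φ, hFne.image φ, ?_, ?_⟩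
  · rintro _ hX' _ hY' hne
    obtain ⟨X, hX, rfl⟩ := mem_image.mp hX'
    obtain ⟨Y, hY, rfl⟩ := mem_image.mp hY'
    rw [hφ X hX Y hY]
    exact hdist X (hFC hX) Y (hFC hY) (ne_of_apply_ne φ hne)
  · rw [card_image_of_injOn hφinj, mul_comm]
    exact hfiber.trans (Nat.mul_le_mul_right _ hSimage)

/-- Locality-aware puncturing bound (cardinality form):
any `r`-locally recoverable code `C` of length `n`, minimum distance `d`, over an
alphabet of size `q ≥ 2`, yields for each admissible `t` a code `C'` of length
`n - t (r+1)`, still of minimum distance `d`, with `|C'| · q^{tr} ≥ |C|`. -/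
theorem stmt_0 (n q d r : ℕ) (hq : 2 ≤ q)
    (Q : Type) [Fintype Q] [DecidableEq Q] (hcard : Fintype.card Q = q)
    (C : Finset (Fin n → Q)) (hC : C.Nonempty)
    (hdist : ∀ X ∈ C, ∀ Y ∈ C, X ≠ Y → d ≤ hammingDist X Y)
    (hloc : ∀ i : Fin n, ∃ R : Finset (Fin n), i ∉ R ∧ R.card = r ∧
      ∀ X ∈ C, ∀ Y ∈ C, X i ≠ Y i → ∃ j ∈ R, X j ≠ Y j)
    (t : ℕ) (ht : 0 < t) (htn : t * (r + 1) ≤ n) (htC : q ^ (t * r) ≤ C.card) :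
    ∃ C' : Finset (Fin (n - t * (r + 1)) → Q), C'.Nonempty ∧
      (∀ X ∈ C', ∀ Y ∈ C', X ≠ Y → d ≤ hammingDist X Y) ∧
      C.card ≤ C'.card * q ^ (t * r) :=
  stmt_0_general n q d r Q hcard C hC hdist hloc t htn
end

section
/- Let C be a nonempty code of length n over a finite alphabet Q of size q ≥ 2 that is r-locally recoverable (r ≥ 1). Then for every positive integer t with t·(r+1) ≤ n and q^(t·r) ≤ |C|, there exists a set I ⊆ {1,...,n} with |I| = t·(r+1) such that the projection of C onto the coordinates in I has at most q^(t·r) elements. -/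
/-- (Lemma 1 of the paper, cardinality form.)
For an `r`-locally recoverable code `C` of length `n` over an alphabet of size `q ≥ 2`,
for every positive `t` with `t(r+1) ≤ n` and `q^{tr} ≤ |C|`, there is a coordinate set `I`
of size `t(r+1)` such that the projection of `C` onto `I` has at most `q^{tr}` elements. -/
theorem stmt_1 (n q r : ℕ) (hq : 2 ≤ q) (hr : 1 ≤ r)
    (Q : Type) [Fintype Q] [DecidableEq Q] (hcard : Fintype.card Q = q)
    (C : Finset (Fin n → Q)) (hC : C.Nonempty)
    (hloc : ∀ i : Fin n, ∃ R : Finset (Fin n), i ∉ R ∧ R.card = r ∧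
      ∀ X ∈ C, ∀ Y ∈ C, X i ≠ Y i → ∃ j ∈ R, X j ≠ Y j)
    (t : ℕ) (ht : 0 < t) (htn : t * (r + 1) ≤ n) (htC : q ^ (t * r) ≤ C.card) :
    ∃ I : Finset (Fin n), I.card = t * (r + 1) ∧
      (C.image (fun X => fun j : {x // x ∈ I} => X j.1)).card ≤ q ^ (t * r) := by
  have key : ∀ s : ℕ, s * (r + 1) ≤ n →
      ∃ D I : Finset (Fin n), D ⊆ I ∧ D.card = s ∧ I.card ≤ s * (r + 1) ∧
        ∀ X ∈ C, ∀ Y ∈ C, (∀ j ∈ I \ D, X j = Y j) → ∀ j ∈ I, X j = Y j := by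
    intro s
    induction s with
    | zero => intro _; exact ⟨∅, ∅, by simp, by simp, by simp, by simp⟩
    | succ k ih =>
      intro hs
      have hk : k * (r + 1) ≤ n := le_trans (by nlinarith) hs
      obtain ⟨D, I, hDI, hDcard, hIcard, hdet⟩ := ih hk
      have hIlt : I.card < n := lt_of_le_of_lt hIcard (lt_of_lt_of_le (by nlinarith) hs)
      obtain ⟨i, hi⟩ : ∃ i : Fin n, i ∉ I := by
        by_contra h
        push_neg at h
        have hsub : (Finset.univ : Finset (Fin n)) ⊆ I := fun x _ => h x
        have := Finset.card_le_card hsub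
        simp [Finset.card_univ] at this
        omega
      obtain ⟨R, hiR, hRcard, hR⟩ := hloc i
      refine ⟨insert i D, insert i (I ∪ R), ?_, ?_, ?_, ?_⟩
      · exact Finset.insert_subset_insert _ (hDI.trans Finset.subset_union_left)
      · rw [Finset.card_insert_of_notMem (fun h => hi (hDI h))]; omega
      · calc (insert i (I ∪ R)).card ≤ (I ∪ R).card + 1 := Finset.card_insert_le _ _
          _ ≤ I.card + R.card + 1 := by linarith [Finset.card_union_le I R]
          _ ≤ (k + 1) * (r + 1) := by rw [hRcard]; nlinarith
      · intro X hX Y hY hagree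
        have hIagree : ∀ j ∈ I, X j = Y j := by
          apply hdet X hX Y hY
          intro j hj
          rw [Finset.mem_sdiff] at hj
          apply hagree
          rw [Finset.mem_sdiff, Finset.mem_insert, Finset.mem_union, Finset.mem_insert]
          exact ⟨Or.inr (Or.inl hj.1), fun h => h.elim (fun h => hi (h ▸ hj.1)) hj.2⟩
        have hRagree : ∀ j ∈ R, X j = Y j := by
          intro j hj
          by_cases hjD : j ∈ D
          · exact hIagree j (hDI hjD)
          · apply hagree
            rw [Finset.mem_sdiff, Finset.mem_insert, Finset.mem_union, Finset.mem_insert]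
            exact ⟨Or.inr (Or.inr hj), fun h => h.elim (fun h => hiR (h ▸ hj)) hjD⟩
        have hiagree : X i = Y i := by
          by_contra hne
          obtain ⟨j, hj, hne'⟩ := hR X hX Y hY hne
          exact hne' (hRagree j hj)
        intro j hj
        rw [Finset.mem_insert, Finset.mem_union] at hj
        rcases hj with rfl | hj | hj
        · exact hiagree
        · exact hIagree j hj
        · exact hRagree j hj
  obtain ⟨D, I, hDI, hDcard, hIcard, hdet⟩ := key t htn
  obtain ⟨E, hEsub, hEcard⟩ : ∃ E ⊆ Finset.univ \ I, E.card = t * (r + 1) - I.card := by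
    apply Finset.exists_subset_card_eq
    rw [Finset.card_sdiff_of_subset (Finset.subset_univ _), Finset.card_univ, Fintype.card_fin]
    omega
  have hdisj : Disjoint I E := by
    refine Finset.disjoint_left.mpr fun x hxI hxE => ?_
    have := hEsub hxE
    rw [Finset.mem_sdiff] at this
    exact this.2 hxI
  set J := I ∪ E with hJ
  have hJcard : J.card = t * (r + 1) := by
    rw [hJ, Finset.card_union_of_disjoint hdisj, hEcard]
    omega
  have hDJ : D ⊆ J := hDI.trans Finset.subset_union_left
  have hdetJ : ∀ X ∈ C, ∀ Y ∈ C, (∀ j ∈ J \ D, X j = Y j) → ∀ j ∈ J, X j = Y j := by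
    intro X hX Y hY h j hj
    have hIag : ∀ j ∈ I, X j = Y j := by
      apply hdet X hX Y hY
      intro j hj
      rw [Finset.mem_sdiff] at hj
      exact h j (Finset.mem_sdiff.mpr ⟨Finset.mem_union_left _ hj.1, hj.2⟩)
    rcases Finset.mem_union.mp hj with hj | hj
    · exact hIag j hj
    · refine h j (Finset.mem_sdiff.mpr ⟨Finset.mem_union_right _ hj, fun hD => ?_⟩)
      have := hEsub hj
      rw [Finset.mem_sdiff] at this
      exact this.2 (hDI hD)
  refine ⟨J, hJcard, ?_⟩
  have hKcard : (J \ D).card = t * r := by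
    rw [Finset.card_sdiff_of_subset hDJ, hJcard, hDcard]
    have : t * (r + 1) = t * r + t := by ring
    omega
  set f : ({x // x ∈ J} → Q) → ({x // x ∈ J \ D} → Q) :=
    fun g j => g ⟨j.1, Finset.sdiff_subset j.2⟩ with hf
  have hinj : Set.InjOn f (C.image (fun X => fun j : {x // x ∈ J} => X j.1)) := by
    intro a ha b hb hab
    simp only [Finset.coe_image, Set.mem_image, Finset.mem_coe] at ha hb
    obtain ⟨X, hX, rfl⟩ := ha
    obtain ⟨Y, hY, rfl⟩ := hb
    have hXY : ∀ j ∈ J \ D, X j = Y j := by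
      intro j hj
      exact congrFun hab ⟨j, hj⟩
    funext j
    exact hdetJ X hX Y hY hXY j.1 j.2
  have hle := Finset.card_le_card_of_injOn f
    (fun _ _ => Finset.mem_univ _) hinj
  calc (C.image (fun X => fun j : {x // x ∈ J} => X j.1)).card
      ≤ (Finset.univ : Finset ({x // x ∈ J \ D} → Q)).card := hle
    _ = q ^ (t * r) := by
        rw [Finset.card_univ, Fintype.card_fun, hcard, Fintype.card_coe, hKcard]
end

section
/- Let C be a nonempty code of length n over a finite alphabet Q of size q ≥ 2 such that any two distinct codewords are at Hamming distance at least d ≥ 1, and suppose C is r-locally recoverable. Then for every positive integer t such that t·(r+1) ≤ n, q^(t·r) ≤ |C|, and d > (n − t·(r+1))·(1 − 1/q) (so that the punctured length lies in the Plotkin regime), one has |C| ≤ q^(t·r) · (2·q²·d)/(q−1). -/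
lemma stmt4_greedy (n q r : ℕ) (Q : Type) [Fintype Q] [DecidableEq Q]
    (C : Finset (Fin n → Q))
    (hloc : ∀ i : Fin n, ∃ R : Finset (Fin n), i ∉ R ∧ R.card = r ∧
      ∀ X ∈ C, ∀ Y ∈ C, X i ≠ Y i → ∃ j ∈ R, X j ≠ Y j) :
    ∀ m : ℕ, m * (r + 1) ≤ n → ∃ (I : Fin m → Fin n) (R : Fin m → Finset (Fin n)),
      Function.Injective I ∧
      (∀ j, I j ∉ R j) ∧ (∀ j, (R j).card ≤ r) ∧
      (∀ j, ∀ X ∈ C, ∀ Y ∈ C, X (I j) ≠ Y (I j) → ∃ l ∈ R j, X l ≠ Y l) ∧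
      (∀ j k, I k ∈ R j → (k : ℕ) < (j : ℕ)) := by
  intro m
  induction m with
  | zero =>
    intro _
    exact ⟨Fin.elim0, Fin.elim0, fun a => a.elim0, fun j => j.elim0, fun j => j.elim0,
      fun j => j.elim0, fun j => j.elim0⟩
  | succ m ih =>
    intro hmn
    obtain ⟨I, R, hinj, hnm, hcard, hrec, hord⟩ := ih (by nlinarith)
    set U : Finset (Fin n) :=
      (Finset.univ.image I) ∪ (Finset.univ.biUnion R) with hUdef
    have hUcard : U.card ≤ m * (r + 1) := by
      calc U.card ≤ (Finset.univ.image I).card + (Finset.univ.biUnion R).card :=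
            Finset.card_union_le _ _
        _ ≤ m + m * r := by
            gcongr
            · exact le_trans (Finset.card_image_le) (by simp)
            · exact le_trans (Finset.card_biUnion_le)
                (le_trans (Finset.sum_le_card_nsmul _ _ r (fun j _ => hcard j)) (by simp))
        _ = m * (r + 1) := by ring
    have hUlt : U.card < n := by
      have : m * (r + 1) + (r + 1) ≤ n := by nlinarith
      omega
    have hcompl : Uᶜ.Nonempty := by
      rw [← Finset.card_pos, Finset.card_compl]
      simp only [Fintype.card_fin]
      omega
    obtain ⟨i, hi⟩ := hcompl
    have hiU : i ∉ U := Finset.mem_compl.1 hi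
    obtain ⟨Rn, hiRn, hRncard, hRnrec⟩ := hloc i
    refine ⟨Fin.snoc I i, Fin.snoc R Rn, ?_, ?_, ?_, ?_, ?_⟩
    · intro a b hab
      cases a using Fin.lastCases with
      | last =>
        cases b using Fin.lastCases with
        | last => rfl
        | cast b =>
          rw [Fin.snoc_last, Fin.snoc_castSucc] at hab
          exact absurd (hab ▸ (Finset.mem_union_left _
            (Finset.mem_image_of_mem I (Finset.mem_univ b)))) hiU
      | cast a =>
        cases b using Fin.lastCases with
        | last =>
          rw [Fin.snoc_last, Fin.snoc_castSucc] at hab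
          exact absurd (hab ▸ (Finset.mem_union_left _
            (Finset.mem_image_of_mem I (Finset.mem_univ a)))) hiU
        | cast b =>
          rw [Fin.snoc_castSucc, Fin.snoc_castSucc] at hab
          exact congrArg Fin.castSucc (hinj hab)
    · intro j
      cases j using Fin.lastCases with
      | last => rw [Fin.snoc_last, Fin.snoc_last]; exact hiRn
      | cast j => rw [Fin.snoc_castSucc, Fin.snoc_castSucc]; exact hnm j
    · intro j
      cases j using Fin.lastCases with
      | last => rw [Fin.snoc_last]; exact le_of_eq hRncard
      | cast j => rw [Fin.snoc_castSucc]; exact hcard j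
    · intro j
      cases j using Fin.lastCases with
      | last => rw [Fin.snoc_last, Fin.snoc_last]; exact hRnrec
      | cast j => simp only [Fin.snoc_castSucc]; exact hrec j
    · intro j k
      cases j using Fin.lastCases with
      | last =>
        cases k using Fin.lastCases with
        | last => rw [Fin.snoc_last, Fin.snoc_last]; intro h; exact absurd h hiRn
        | cast k =>
          intro _
          simp only [Fin.coe_castSucc, Fin.val_last]
          omega
      | cast j =>
        rw [Fin.snoc_castSucc]
        cases k using Fin.lastCases with
        | last =>
          rw [Fin.snoc_last]
          intro h
          exact absurd (Finset.mem_union_right _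
            (Finset.mem_biUnion.2 ⟨j, Finset.mem_univ _, h⟩)) hiU
        | cast k =>
          rw [Fin.snoc_castSucc]
          intro h
          simpa using hord j k h


set_option maxHeartbeats 1000000 in
lemma stmt4_plotkin (N q d : ℕ) (hq : 2 ≤ q) (Q : Type) [Fintype Q] [DecidableEq Q]
    (hcard : Fintype.card Q = q) (P : Finset (Fin N)) (C₀ : Finset (Fin N → Q))
    (h₀ : C₀.Nonempty)
    (hdd : ∀ X ∈ C₀, ∀ Y ∈ C₀, X ≠ Y →
      d ≤ ∑ i ∈ P, (if X i ≠ Y i then 1 else 0))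
    (hpl : P.card * (q - 1) + 1 ≤ q * d) : C₀.card ≤ q * d := by
  classical
  set M := C₀.card with hM
  have hM1 : 1 ≤ M := Finset.card_pos.2 h₀
  set D : ℕ := ∑ X ∈ C₀, ∑ Y ∈ C₀, ∑ i ∈ P, (if X i ≠ Y i then 1 else 0) with hD
  -- lower bound on D
  have hlow : M * ((M - 1) * d) ≤ D := by
    have key : ∀ X ∈ C₀, (M - 1) * d ≤ ∑ Y ∈ C₀, ∑ i ∈ P, (if X i ≠ Y i then 1 else 0) := by
      intro X hX
      have h1 : ∀ Y ∈ C₀.erase X, d ≤ ∑ i ∈ P, (if X i ≠ Y i then 1 else 0) := by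
        intro Y hY
        exact hdd X hX Y (Finset.mem_of_mem_erase hY) (Finset.ne_of_mem_erase hY).symm
      calc (M - 1) * d = (C₀.erase X).card • d := by
            rw [Finset.card_erase_of_mem hX, smul_eq_mul]
        _ ≤ ∑ Y ∈ C₀.erase X, ∑ i ∈ P, (if X i ≠ Y i then 1 else 0) :=
            Finset.card_nsmul_le_sum _ _ _ h1
        _ ≤ ∑ Y ∈ C₀, ∑ i ∈ P, (if X i ≠ Y i then 1 else 0) :=
            Finset.sum_le_sum_of_subset (Finset.erase_subset _ _)
    calc M * ((M - 1) * d) = C₀.card • ((M - 1) * d) := by rw [smul_eq_mul]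
      _ ≤ D := Finset.card_nsmul_le_sum _ _ _ key
  -- swap sums
  have hswap : D = ∑ i ∈ P, ∑ X ∈ C₀, ∑ Y ∈ C₀, (if X i ≠ Y i then 1 else 0) := by
    rw [hD]
    rw [Finset.sum_congr rfl (fun X _ => Finset.sum_comm (s := C₀) (t := P)
      (f := fun Y i => if X i ≠ Y i then 1 else 0))]
    exact Finset.sum_comm
  -- per-coordinate upper bound
  have hcoord : ∀ i ∈ P, q * (∑ X ∈ C₀, ∑ Y ∈ C₀, (if X i ≠ Y i then 1 else 0))
      ≤ (q - 1) * (M * M) := by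
    intro i _
    set m : Q → ℕ := fun a => (C₀.filter fun X => X i = a).card with hm
    have hpoint : ∀ (X Y : Fin N → Q),
        (if X i ≠ Y i then 1 else 0) + (if Y i = X i then 1 else 0) = 1 := by
      intro X Y
      by_cases h : X i = Y i
      · simp [h]
      · have h' : ¬ Y i = X i := fun e => h e.symm
        simp [h, h']
    have hinner : ∀ X : Fin N → Q,
        (∑ Y ∈ C₀, (if X i ≠ Y i then 1 else 0)) + m (X i) = M := by
      intro X
      have hmx : m (X i) = ∑ Y ∈ C₀, (if Y i = X i then 1 else 0) :=
        Finset.card_filter _ _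
      rw [hmx, ← Finset.sum_add_distrib]
      simp only [hpoint]
      rw [Finset.sum_const, smul_eq_mul, mul_one]
    have hsplit : (∑ X ∈ C₀, ∑ Y ∈ C₀, (if X i ≠ Y i then 1 else 0)) + ∑ X ∈ C₀, m (X i)
        = M * M := by
      rw [← Finset.sum_add_distrib]
      have : ∀ X ∈ C₀, ((∑ Y ∈ C₀, (if X i ≠ Y i then 1 else 0)) + m (X i)) = M :=
        fun X _ => hinner X
      rw [Finset.sum_congr rfl this, Finset.sum_const, smul_eq_mul]
    have hfib : ∑ X ∈ C₀, m (X i) = ∑ a : Q, m a * m a := by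
      rw [← Finset.sum_fiberwise C₀ (fun X => X i) (fun X => m (X i))]
      refine Finset.sum_congr rfl fun a _ => ?_
      rw [Finset.sum_congr rfl (fun X hX => by rw [(Finset.mem_filter.1 hX).2]),
        Finset.sum_const, smul_eq_mul]
    have h2 : ∑ a : Q, m a = M :=
      (Finset.card_eq_sum_card_fiberwise (s := C₀) (t := (Finset.univ : Finset Q))
        (f := fun X => X i) (fun X _ => Finset.mem_univ (X i))).symm
    have hcs : M * M ≤ q * (∑ a : Q, m a * m a) := by
      have hq' := sq_sum_le_card_mul_sum_sq (s := (Finset.univ : Finset Q))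
        (f := fun a => (m a : ℚ))
      rw [Finset.card_univ, hcard] at hq'
      have hcast : ((M * M : ℕ) : ℚ) ≤ ((q * ∑ a : Q, m a * m a : ℕ) : ℚ) := by
        push_cast
        have e1 : ((M : ℚ)) = ∑ a : Q, (m a : ℚ) := by
          rw [← h2]; push_cast; rfl
        rw [e1]
        calc (∑ a : Q, (m a : ℚ)) * (∑ a : Q, (m a : ℚ)) = (∑ a : Q, (m a : ℚ)) ^ 2 := by
              ring
          _ ≤ (q : ℚ) * ∑ a : Q, ((m a : ℚ)) ^ 2 := hq'
          _ = (q : ℚ) * ∑ a : Q, ((m a : ℚ)) * (m a : ℚ) := by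
              simp only [pow_two]
      exact_mod_cast hcast
    set A : ℕ := ∑ X ∈ C₀, ∑ Y ∈ C₀, (if X i ≠ Y i then 1 else 0) with hA
    have hAE : A + ∑ a : Q, m a * m a = M * M := by rw [← hfib]; exact hsplit
    have h4 : q * A + q * (∑ a : Q, m a * m a) = q * (M * M) := by rw [← Nat.mul_add, hAE]
    have h5 : q * A + M * M ≤ q * (M * M) := by
      calc q * A + M * M ≤ q * A + q * (∑ a : Q, m a * m a) := Nat.add_le_add_left hcs _
        _ = q * (M * M) := h4
    have h6 : (q - 1) * (M * M) + M * M = q * (M * M) := by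
      have hq1 : q - 1 + 1 = q := Nat.sub_add_cancel (le_trans one_le_two hq)
      calc (q - 1) * (M * M) + M * M = (q - 1 + 1) * (M * M) := by ring
        _ = q * (M * M) := by rw [hq1]
    rw [← h6] at h5
    exact Nat.le_of_add_le_add_right h5
  -- combine
  have hupper : q * D ≤ P.card * ((q - 1) * (M * M)) := by
    rw [hswap, Finset.mul_sum]
    calc ∑ i ∈ P, q * (∑ X ∈ C₀, ∑ Y ∈ C₀, (if X i ≠ Y i then 1 else 0))
        ≤ P.card • ((q - 1) * (M * M)) := Finset.sum_le_card_nsmul _ _ _ hcoord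
      _ = P.card * ((q - 1) * (M * M)) := by rw [smul_eq_mul]
  have hmain : q * (M * ((M - 1) * d)) ≤ (P.card * (q - 1)) * (M * M) := by
    calc q * (M * ((M - 1) * d)) ≤ q * D := Nat.mul_le_mul_left _ hlow
      _ ≤ P.card * ((q - 1) * (M * M)) := hupper
      _ = (P.card * (q - 1)) * (M * M) := by ring
  have hcast : ((q : ℚ) * d) * ((M : ℚ) * ((M : ℚ) - 1))
      ≤ ((P.card : ℚ) * ((q : ℚ) - 1)) * ((M : ℚ) * (M : ℚ)) := by
    have h1 : ((q * (M * ((M - 1) * d)) : ℕ) : ℚ) ≤ (((P.card * (q - 1)) * (M * M) : ℕ) : ℚ) :=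
      Nat.cast_le.2 hmain
    push_cast at h1
    rw [Nat.cast_sub hM1, Nat.cast_sub (le_trans one_le_two hq)] at h1
    push_cast at h1
    linarith [h1]
  have hpl' : (P.card : ℚ) * ((q : ℚ) - 1) + 1 ≤ (q : ℚ) * d := by
    have h1 : ((P.card * (q - 1) + 1 : ℕ) : ℚ) ≤ ((q * d : ℕ) : ℚ) := Nat.cast_le.2 hpl
    push_cast at h1
    rw [Nat.cast_sub (le_trans one_le_two hq)] at h1
    push_cast at h1
    linarith
  have hgoal : (M : ℚ) ≤ (q : ℚ) * d := by
    have hMq : (1 : ℚ) ≤ (M : ℚ) := by exact_mod_cast hM1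
    nlinarith [hcast, hpl', hMq]
  exact_mod_cast hgoal


set_option maxHeartbeats 1000000 in
/-- Locality-aware Plotkin bound: if `C` is an `r`-locally recoverable
code of length `n`, minimum distance `d ≥ 1`, over an alphabet of size `q ≥ 2`, and `t`
is a positive integer with `t(r+1) ≤ n`, `q^{tr} ≤ |C|`, and
`d > (n - t(r+1))(1 - 1/q)`, then `|C| ≤ q^{tr} · 2q²d/(q-1)`. -/
theorem stmt_4 (n q d r : ℕ) (hq : 2 ≤ q) (hd : 1 ≤ d)
    (Q : Type) [Fintype Q] [DecidableEq Q] (hcard : Fintype.card Q = q)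
    (C : Finset (Fin n → Q)) (hC : C.Nonempty)
    (hdist : ∀ X ∈ C, ∀ Y ∈ C, X ≠ Y → d ≤ hammingDist X Y)
    (hloc : ∀ i : Fin n, ∃ R : Finset (Fin n), i ∉ R ∧ R.card = r ∧
      ∀ X ∈ C, ∀ Y ∈ C, X i ≠ Y i → ∃ j ∈ R, X j ≠ Y j)
    (t : ℕ) (ht : 0 < t) (htn : t * (r + 1) ≤ n) (htC : q ^ (t * r) ≤ C.card)
    (hplotkin : ((n - t * (r + 1) : ℕ) : ℚ) * (1 - 1 / (q : ℚ)) < (d : ℚ)) :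
    (C.card : ℚ) ≤ (q : ℚ) ^ (t * r) * (2 * (q : ℚ) ^ 2 * (d : ℚ)) / ((q : ℚ) - 1) := by
  classical
  obtain ⟨I, R, hinj, hnm, hRcard, hrec, hord⟩ := stmt4_greedy n q r Q C hloc t htn
  set T : Finset (Fin n) := Finset.univ.image I with hT
  have hTcard : T.card = t := by
    rw [hT, Finset.card_image_of_injective _ hinj, Finset.card_univ, Fintype.card_fin]
  set U : Finset (Fin n) := T ∪ Finset.univ.biUnion R with hU
  have hUcard : U.card ≤ t * (r + 1) := by
    calc U.card ≤ T.card + (Finset.univ.biUnion R).card := Finset.card_union_le _ _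
      _ ≤ t + t * r := by
          gcongr
          · exact le_of_eq hTcard
          · exact le_trans Finset.card_biUnion_le
              (le_trans (Finset.sum_le_card_nsmul _ _ r (fun j _ => hRcard j)) (by simp))
      _ = t * (r + 1) := by ring
  obtain ⟨S', hUS', hS'card⟩ := Finset.exists_superset_card_eq hUcard
    (by rw [Fintype.card_fin]; exact htn)
  have hTS' : T ⊆ S' := Finset.Subset.trans Finset.subset_union_left hUS'
  set B : Finset (Fin n) := S' \ T with hB
  have hBcard : B.card = t * r := by
    rw [hB, Finset.card_sdiff_of_subset hTS', hS'card, hTcard, Nat.mul_succ, Nat.add_sub_cancel]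
  -- agreement on B propagates to all of S'
  have hkey : ∀ X ∈ C, ∀ Y ∈ C, (∀ b ∈ B, X b = Y b) → ∀ s ∈ S', X s = Y s := by
    intro X hX Y hY hagree
    have hkeyI : ∀ mm : ℕ, ∀ j : Fin t, (j : ℕ) = mm → X (I j) = Y (I j) := by
      intro mm
      induction mm using Nat.strong_induction_on with
      | _ mm IH =>
        intro j hj
        by_contra hne
        obtain ⟨l, hlR, hlne⟩ := hrec j X hX Y hY hne
        have hlS : l ∈ S' := hUS' (Finset.mem_union_right _
          (Finset.mem_biUnion.2 ⟨j, Finset.mem_univ _, hlR⟩))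
        by_cases hlT : l ∈ T
        · obtain ⟨k, -, hk⟩ := Finset.mem_image.1 hlT
          have hkj : (k : ℕ) < (j : ℕ) := hord j k (by rw [hk]; exact hlR)
          have hIk := IH k (by omega) k rfl
          exact hlne (by rw [← hk]; exact hIk)
        · exact hlne (hagree l (Finset.mem_sdiff.2 ⟨hlS, hlT⟩))
    intro s hs
    by_cases hsT : s ∈ T
    · obtain ⟨j, -, hj⟩ := Finset.mem_image.1 hsT
      rw [← hj]; exact hkeyI j j rfl
    · exact hagree s (Finset.mem_sdiff.2 ⟨hs, hsT⟩)
  -- fibers of the restriction-to-B map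
  set g : (Fin n → Q) → (↥B → Q) := fun X b => X b.1 with hg
  have himg : (C.image g).card ≤ q ^ (t * r) := by
    refine le_trans (Finset.card_le_univ _) ?_
    rw [Fintype.card_fun, Fintype.card_coe, hcard, hBcard]
  obtain ⟨v, hv, hvmax⟩ := Finset.exists_max_image (C.image g)
    (fun w => (C.filter fun X => g X = w).card) (hC.image g)
  set C₀ := C.filter (fun X => g X = v) with hC₀
  have hMle : C.card ≤ q ^ (t * r) * C₀.card := by
    calc C.card = ∑ w ∈ C.image g, (C.filter fun X => g X = w).card :=
          Finset.card_eq_sum_card_fiberwise (fun X hX => Finset.mem_image_of_mem g hX)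
      _ ≤ (C.image g).card • C₀.card := Finset.sum_le_card_nsmul _ _ _ (fun w hw => hvmax w hw)
      _ = (C.image g).card * C₀.card := by rw [smul_eq_mul]
      _ ≤ q ^ (t * r) * C₀.card := Nat.mul_le_mul_right _ himg
  have h₀ : C₀.Nonempty := by
    obtain ⟨X, hX, hgX⟩ := Finset.mem_image.1 hv
    exact ⟨X, Finset.mem_filter.2 ⟨hX, hgX⟩⟩
  have hagreeC₀ : ∀ X ∈ C₀, ∀ Y ∈ C₀, ∀ s ∈ S', X s = Y s := by
    intro X hX Y hY
    have hXf := Finset.mem_filter.1 hX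
    have hYf := Finset.mem_filter.1 hY
    refine hkey X hXf.1 Y hYf.1 (fun b hb => ?_)
    have hgXY : g X = g Y := hXf.2.trans hYf.2.symm
    exact congrFun hgXY ⟨b, hb⟩
  set P : Finset (Fin n) := S'ᶜ with hP
  have hPcard : P.card = n - t * (r + 1) := by
    rw [hP, Finset.card_compl, Fintype.card_fin, hS'card]
  have hdd : ∀ X ∈ C₀, ∀ Y ∈ C₀, X ≠ Y → d ≤ ∑ i ∈ P, (if X i ≠ Y i then 1 else 0) := by
    intro X hX Y hY hne
    have h1 : d ≤ hammingDist X Y :=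
      hdist X (Finset.mem_filter.1 hX).1 Y (Finset.mem_filter.1 hY).1 hne
    have h2 : hammingDist X Y = (Finset.univ.filter fun i => X i ≠ Y i).card := rfl
    have hsub : (Finset.univ.filter fun i => X i ≠ Y i) ⊆ (P.filter fun i => X i ≠ Y i) := by
      intro i hi
      have hine := (Finset.mem_filter.1 hi).2
      refine Finset.mem_filter.2 ⟨?_, hine⟩
      rw [hP, Finset.mem_compl]
      intro hiS'
      exact hine (hagreeC₀ X hX Y hY i hiS')
    calc d ≤ (Finset.univ.filter fun i => X i ≠ Y i).card := h2 ▸ h1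
      _ ≤ (P.filter fun i => X i ≠ Y i).card := Finset.card_le_card hsub
      _ = ∑ i ∈ P, (if X i ≠ Y i then 1 else 0) := Finset.card_filter _ _
  have hpl : P.card * (q - 1) + 1 ≤ q * d := by
    have hq0 : (0 : ℚ) < (q : ℚ) := by
      have : (2 : ℚ) ≤ (q : ℚ) := by exact_mod_cast hq
      linarith
    have h1 : ((n - t * (r + 1) : ℕ) : ℚ) * ((q : ℚ) - 1) < (q : ℚ) * d := by
      have h2 := mul_lt_mul_of_pos_right hplotkin hq0
      have h3 : ((n - t * (r + 1) : ℕ) : ℚ) * (1 - 1 / (q : ℚ)) * (q : ℚ)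
          = ((n - t * (r + 1) : ℕ) : ℚ) * ((q : ℚ) - 1) := by
        field_simp
      linarith [h2, h3]
    have h4 : (n - t * (r + 1)) * (q - 1) < q * d := by
      have h5 : (((n - t * (r + 1)) * (q - 1) : ℕ) : ℚ) < ((q * d : ℕ) : ℚ) := by
        push_cast
        rw [Nat.cast_sub (le_trans one_le_two hq)]
        push_cast
        linarith [h1]
      exact_mod_cast h5
    rw [hPcard]
    exact h4
  have hM₀ : C₀.card ≤ q * d := stmt4_plotkin n q d hq Q hcard P C₀ h₀ hdd hpl
  have hfinal : (C.card : ℚ) ≤ (q : ℚ) ^ (t * r) * ((q : ℚ) * d) := by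
    have ha : (C.card : ℚ) ≤ ((q ^ (t * r) * C₀.card : ℕ) : ℚ) := Nat.cast_le.2 hMle
    have hb : ((q ^ (t * r) * C₀.card : ℕ) : ℚ) ≤ (q : ℚ) ^ (t * r) * ((q : ℚ) * d) := by
      push_cast
      have hc : (C₀.card : ℚ) ≤ (q : ℚ) * d := by exact_mod_cast hM₀
      have hp : (0 : ℚ) ≤ (q : ℚ) ^ (t * r) := by positivity
      exact mul_le_mul_of_nonneg_left hc hp
    linarith
  have hq1 : (0 : ℚ) < (q : ℚ) - 1 := by
    have : (2 : ℚ) ≤ (q : ℚ) := by exact_mod_cast hq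
    linarith
  rw [le_div_iff₀ hq1]
  have hp : (0 : ℚ) ≤ (q : ℚ) ^ (t * r) := by positivity
  have hd0 : (0 : ℚ) ≤ (d : ℚ) := by positivity
  have hq2 : (2 : ℚ) ≤ (q : ℚ) := by exact_mod_cast hq
  have step1 : (C.card : ℚ) * ((q : ℚ) - 1)
      ≤ ((q : ℚ) ^ (t * r) * ((q : ℚ) * d)) * ((q : ℚ) - 1) :=
    mul_le_mul_of_nonneg_right hfinal hq1.le
  have step2a : (q : ℚ) * d * ((q : ℚ) - 1) ≤ 2 * (q : ℚ) ^ 2 * d := by nlinarith [hd0, hq2]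
  have step2 : ((q : ℚ) ^ (t * r) * ((q : ℚ) * d)) * ((q : ℚ) - 1)
      ≤ (q : ℚ) ^ (t * r) * (2 * (q : ℚ) ^ 2 * d) := by
    calc ((q : ℚ) ^ (t * r) * ((q : ℚ) * d)) * ((q : ℚ) - 1)
        = (q : ℚ) ^ (t * r) * ((q : ℚ) * d * ((q : ℚ) - 1)) := by ring
      _ ≤ (q : ℚ) ^ (t * r) * (2 * (q : ℚ) ^ 2 * d) := mul_le_mul_of_nonneg_left step2a hp
  linarith
end

section
/- Let m ≥ 2, index coordinates by the integers {1, 2, ..., 2^m − 1}, and let b(s) ∈ F_2^m denote the binary representation of s. Define the binary Hamming code H = {x ∈ F_2^(2^m − 1) : Σ_{s=1}^{2^m − 1} x_s · b(s) = 0 in F_2^m}. For 1 ≤ j ≤ m − 1 and 1 ≤ i < 2^j, let g_{i,j} ∈ F_2^(2^m − 1) be the vector with exactly three ones, at positions i, 2^j, and i + 2^j. Then the 2^m − 1 − m vectors g_{i,j} are linearly independent and span H; in particular H admits a generator matrix in which every row has Hamming weight exactly 3. -/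
/-- `binRep m s` is the binary representation of the natural number `s`
as a vector in `F₂^m`. -/
def binRep (m : ℕ) (s : ℕ) : Fin m → ZMod 2 :=
  fun i => if s.testBit i.1 then 1 else 0

/-- The binary Hamming code of length `2^m - 1`: coordinates are indexed by
`{1, ..., 2^m - 1}` (coordinate `s : Fin (2^m - 1)` stands for the integer `s+1`),
and a word `x` lies in the code iff `∑ s x_s · b(s) = 0` in `F₂^m`. -/
def hammingCode (m : ℕ) : Set (Fin (2 ^ m - 1) → ZMod 2) :=
  {x | ∑ s : Fin (2 ^ m - 1), x s • binRep m (s.1 + 1) = 0}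

/-- The index set of the weight-3 generators: pairs `(i, j)` with
`1 ≤ j ≤ m - 1` and `1 ≤ i < 2^j`. -/
def genIdx (m : ℕ) : Type :=
  {p : ℕ × ℕ // 1 ≤ p.2 ∧ p.2 ≤ m - 1 ∧ 1 ≤ p.1 ∧ p.1 < 2 ^ p.2}

/-- The generator `g_{i,j}`: the word with exactly three ones, at positions
`i`, `2^j` and `i + 2^j`. -/
def genVec (m : ℕ) (p : genIdx m) : Fin (2 ^ m - 1) → ZMod 2 :=
  fun s => if s.1 + 1 = p.1.1 ∨ s.1 + 1 = 2 ^ p.1.2 ∨ s.1 + 1 = p.1.1 + 2 ^ p.1.2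
    then 1 else 0

/-!
Each `g_{i,j}` is a codeword because `b(i + 2^j) = b(i) + b(2^j)`, so its three columns sum
to `2 · (b(i) + b(2^j)) = 0`. Its last nonzero coordinate is `i + 2^j`, and these pivots are
pairwise distinct (`j` is the leading bit of `i + 2^j`), so the `g_{i,j}` are in echelon form
and hence independent. The parity-check map `x ↦ ∑ x_s b(s)` is onto, since `b(2^t)` is the
`t`-th unit vector; so the code has dimension `2^m - 1 - m`, which is the number of `g_{i,j}`.
-/

open Finset Function

theorem linearIndependent_of_injective_pivot {ι κ R : Type*} [Ring R] [NoZeroDivisors R]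
    [LinearOrder κ] (v : ι → κ → R) (pivot : ι → κ) (hinj : Injective pivot)
    (hpivot : ∀ i, v i (pivot i) ≠ 0) (hzero : ∀ i k, pivot i < k → v i k = 0) :
    LinearIndependent R v := by
  classical
  rw [linearIndependent_iff']
  intro s g hsum i hi
  by_contra hgi
  obtain ⟨p, hp, hmax⟩ := (s.filter (g · ≠ 0)).exists_max_image pivot ⟨i, mem_filter.2 ⟨hi, hgi⟩⟩
  rw [mem_filter] at hp
  have hsum_p := congrFun hsum (pivot p)
  rw [Finset.sum_apply, Finset.sum_eq_single_of_mem p hp.1] at hsum_p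
  · exact mul_ne_zero hp.2 (hpivot p) hsum_p
  · intro q hq hqp
    by_cases hgq : g q = 0
    · simp [hgq]
    · have hlt : pivot q < pivot p :=
        lt_of_le_of_ne (hmax q (mem_filter.2 ⟨hq, hgq⟩)) (hinj.ne hqp)
      simp [hzero q _ hlt]

lemma Nat.log_two_add_two_pow {i j : ℕ} (h : i < 2 ^ j) : Nat.log 2 (i + 2 ^ j) = j :=
  Nat.log_eq_of_pow_le_of_lt_pow (by omega) (by rw [pow_succ]; omega)

lemma Nat.sum_Ico_two_pow_sub_one (m : ℕ) : ∑ j ∈ Ico 1 m, (2 ^ j - 1) = 2 ^ m - 1 - m := by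
  induction m with
  | zero => simp
  | succ m ih =>
    rcases Nat.eq_zero_or_pos m with rfl | hm
    · simp
    rw [sum_Ico_succ_top hm, ih, pow_succ]
    have := @Nat.lt_two_pow_self m
    omega

lemma binRep_two_pow (m : ℕ) (t : Fin m) : binRep m (2 ^ t.1) = Pi.single t 1 := by
  funext r
  simp [binRep, Nat.testBit_two_pow, Pi.single_apply, Fin.ext_iff, eq_comm]

lemma binRep_add_two_pow (m : ℕ) {i j : ℕ} (h : i < 2 ^ j) :
    binRep m (i + 2 ^ j) = binRep m i + binRep m (2 ^ j) := by
  have hor : i + 2 ^ j = 2 ^ j ||| i := by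
    simpa [add_comm] using Nat.two_pow_add_eq_or_of_lt h 1
  have hij : i.testBit j = false := Nat.testBit_lt_two_pow h
  funext r
  simp only [binRep, Pi.add_apply, hor, Nat.testBit_or, Nat.testBit_two_pow]
  by_cases hr : j = r.1
  · subst hr; simp [hij]
  · simp [hr]

def hammingCheck (m : ℕ) : (Fin (2 ^ m - 1) → ZMod 2) →ₗ[ZMod 2] Fin m → ZMod 2 :=
  Fintype.linearCombination (ZMod 2) fun s => binRep m (s.1 + 1)

lemma hammingCode_eq_ker (m : ℕ) : hammingCode m = LinearMap.ker (hammingCheck m) := by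
  ext x
  simp [hammingCode, hammingCheck, Fintype.linearCombination_apply]

lemma range_hammingCheck (m : ℕ) : LinearMap.range (hammingCheck m) = ⊤ := by
  rw [hammingCheck, Fintype.range_linearCombination, eq_top_iff,
    ← (Pi.basisFun (ZMod 2) (Fin m)).span_eq]
  refine Submodule.span_mono ?_
  rintro _ ⟨t, rfl⟩
  have ht : 2 ^ t.1 - 1 < 2 ^ m - 1 := by
    have := Nat.pow_lt_pow_right (a := 2) (by norm_num) t.2
    have := Nat.one_le_two_pow (n := t.1)
    omega
  refine ⟨⟨2 ^ t.1 - 1, ht⟩, ?_⟩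
  rw [Pi.basisFun_apply, ← binRep_two_pow]
  change binRep m (2 ^ t.1 - 1 + 1) = _
  rw [Nat.sub_add_cancel Nat.one_le_two_pow]

lemma finrank_ker_hammingCheck (m : ℕ) :
    Module.finrank (ZMod 2) (LinearMap.ker (hammingCheck m)) = 2 ^ m - 1 - m := by
  have h := LinearMap.finrank_range_add_finrank_ker (hammingCheck m)
  rw [range_hammingCheck, finrank_top] at h
  simp only [Module.finrank_fintype_fun_eq_card, Fintype.card_fin] at h
  omega

namespace genIdx

variable {m : ℕ} (p : genIdx m)

lemma add_two_pow_lt : p.1.1 + 2 ^ p.1.2 < 2 ^ m := by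
  obtain ⟨hj1, hjm, -, hij⟩ := p.2
  calc p.1.1 + 2 ^ p.1.2 < 2 ^ (p.1.2 + 1) := by rw [pow_succ]; omega
    _ ≤ 2 ^ m := Nat.pow_le_pow_right (by norm_num) (by omega)

def low : Fin (2 ^ m - 1) := ⟨p.1.1 - 1, by have := p.add_two_pow_lt; have := p.2; omega⟩

def mid : Fin (2 ^ m - 1) := ⟨2 ^ p.1.2 - 1, by have := p.add_two_pow_lt; have := p.2; omega⟩

def pivot : Fin (2 ^ m - 1) :=
  ⟨p.1.1 + 2 ^ p.1.2 - 1, by have := p.add_two_pow_lt; have := p.2; omega⟩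

lemma low_mid_pivot_distinct : p.low ≠ p.mid ∧ p.low ≠ p.pivot ∧ p.mid ≠ p.pivot := by
  have := p.2
  have := Nat.one_le_two_pow (n := p.1.2)
  simp only [ne_eq, Fin.ext_iff, low, mid, pivot]
  omega

lemma pivot_injective : Injective (pivot (m := m)) := by
  intro p q hpq
  have hp := p.2
  have hq := q.2
  have hsum : p.1.1 + 2 ^ p.1.2 = q.1.1 + 2 ^ q.1.2 := by
    have := Nat.one_le_two_pow (n := p.1.2)
    simp only [pivot, Fin.mk.injEq] at hpq
    omega
  have hj : p.1.2 = q.1.2 := by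
    rw [← Nat.log_two_add_two_pow hp.2.2.2, hsum, Nat.log_two_add_two_pow hq.2.2.2]
  exact Subtype.ext (Prod.ext (by rw [hj] at hsum; omega) hj)

end genIdx

lemma genVec_eq_ite_mem (m : ℕ) (p : genIdx m) (s : Fin (2 ^ m - 1)) :
    genVec m p s = if s ∈ ({p.low, p.mid, p.pivot} : Finset _) then 1 else 0 := by
  have := p.2
  have := Nat.one_le_two_pow (n := p.1.2)
  refine if_congr ?_ rfl rfl
  simp only [mem_insert, mem_singleton, Fin.ext_iff, genIdx.low, genIdx.mid, genIdx.pivot]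
  omega

lemma genVec_pivot (m : ℕ) (p : genIdx m) : genVec m p p.pivot = 1 := by
  simp [genVec_eq_ite_mem]

lemma genVec_eq_zero_of_pivot_lt (m : ℕ) (p : genIdx m) (s : Fin (2 ^ m - 1))
    (hs : p.pivot < s) : genVec m p s = 0 := by
  have := p.2
  rw [Fin.lt_def, genIdx.pivot] at hs
  exact if_neg (by simp only at hs; omega)

lemma hammingNorm_genVec (m : ℕ) (p : genIdx m) : hammingNorm (genVec m p) = 3 := by
  obtain ⟨h₁, h₂, h₃⟩ := p.low_mid_pivot_distinct
  rw [hammingNorm, Finset.card_eq_three]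
  refine ⟨p.low, p.mid, p.pivot, h₁, h₂, h₃, ?_⟩
  ext s
  simp only [mem_filter, mem_univ, true_and, genVec_eq_ite_mem, ne_eq, ite_eq_right_iff,
    one_ne_zero, imp_false, not_not]

lemma hammingCheck_genVec (m : ℕ) (p : genIdx m) : hammingCheck m (genVec m p) = 0 := by
  obtain ⟨h₁, h₂, h₃⟩ := p.low_mid_pivot_distinct
  have := p.2
  have := Nat.one_le_two_pow (n := p.1.2)
  rw [hammingCheck, Fintype.linearCombination_apply]
  simp only [genVec_eq_ite_mem, ite_smul, one_smul, zero_smul, sum_ite_mem, univ_inter]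
  rw [sum_insert (by simp [h₁, h₂]), sum_insert (by simp [h₃]), sum_singleton]
  simp only [genIdx.low, genIdx.mid, genIdx.pivot]
  rw [Nat.sub_add_cancel (by omega), Nat.sub_add_cancel (by omega), Nat.sub_add_cancel (by omega),
    binRep_add_two_pow m p.2.2.2.2, ← add_assoc, ZModModule.add_self]

lemma linearIndependent_genVec (m : ℕ) : LinearIndependent (ZMod 2) (genVec m) :=
  linearIndependent_of_injective_pivot _ _ genIdx.pivot_injective
    (fun p => by rw [genVec_pivot]; exact one_ne_zero) (genVec_eq_zero_of_pivot_lt m)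

def genIdxFinset (m : ℕ) : Finset (ℕ × ℕ) :=
  (Ico 1 m).biUnion fun j => Ico 1 (2 ^ j) ×ˢ {j}

lemma mem_genIdxFinset {m : ℕ} {p : ℕ × ℕ} :
    p ∈ genIdxFinset m ↔ 1 ≤ p.2 ∧ p.2 ≤ m - 1 ∧ 1 ≤ p.1 ∧ p.1 < 2 ^ p.2 := by
  simp only [genIdxFinset, mem_biUnion, mem_Ico, mem_product, mem_singleton]
  constructor
  · rintro ⟨j, hj, hi, rfl⟩
    omega
  · intro h
    exact ⟨p.2, by omega, by omega, rfl⟩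

lemma card_genIdxFinset (m : ℕ) : (genIdxFinset m).card = 2 ^ m - 1 - m := by
  rw [genIdxFinset, card_biUnion]
  · simp only [card_product, Nat.card_Ico, card_singleton, mul_one]
    exact Nat.sum_Ico_two_pow_sub_one m
  · intro j _ k _ hjk
    rw [Function.onFun, disjoint_product]
    exact Or.inr (disjoint_singleton.2 hjk)

instance (m : ℕ) : Fintype (genIdx m) :=
  Fintype.ofFinset (genIdxFinset m) fun _ => mem_genIdxFinset

lemma card_genIdx (m : ℕ) : Fintype.card (genIdx m) = 2 ^ m - 1 - m :=
  (Fintype.card_ofFinset _ _).trans (card_genIdxFinset m)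

lemma span_range_genVec (m : ℕ) :
    Submodule.span (ZMod 2) (Set.range (genVec m)) = LinearMap.ker (hammingCheck m) := by
  refine Submodule.eq_of_le_of_finrank_eq ?_ ?_
  · rw [Submodule.span_le, Set.range_subset_iff]
    exact hammingCheck_genVec m
  · rw [finrank_span_eq_card (linearIndependent_genVec m), card_genIdx, finrank_ker_hammingCheck]

theorem stmt_8_general (m : ℕ) :
    Nat.card (genIdx m) = 2 ^ m - 1 - m ∧
    LinearIndependent (ZMod 2) (genVec m) ∧
    (Submodule.span (ZMod 2) (Set.range (genVec m)) : Set (Fin (2 ^ m - 1) → ZMod 2))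
      = hammingCode m ∧
    (∀ p : genIdx m, hammingNorm (genVec m p) = 3) := by
  refine ⟨?_, linearIndependent_genVec m, ?_, hammingNorm_genVec m⟩
  · rw [Nat.card_eq_fintype_card, card_genIdx]
  · rw [span_range_genVec, hammingCode_eq_ker]

/-- For `m ≥ 2`, the `2^m - 1 - m` vectors `g_{i,j}`
(for `1 ≤ j ≤ m-1`, `1 ≤ i < 2^j`) are linearly independent and span the binary
Hamming code of length `2^m - 1`; moreover each of them has Hamming weight exactly 3,
so the Hamming code admits a generator matrix all of whose rows have weight 3. -/
theorem stmt_8 (m : ℕ) (hm : 2 ≤ m) :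
    Nat.card (genIdx m) = 2 ^ m - 1 - m ∧
    LinearIndependent (ZMod 2) (genVec m) ∧
    (Submodule.span (ZMod 2) (Set.range (genVec m)) : Set (Fin (2 ^ m - 1) → ZMod 2))
      = hammingCode m ∧
    (∀ p : genIdx m, hammingNorm (genVec m p) = 3) :=
  stmt_8_general m
end

section
/- Let q be a prime power, r ≥ 1 an integer, and consider the q-ary single parity-check code P = {x ∈ F_q^(r+1) : x_1 + x_2 + ... + x_{r+1} = 0}. Then for every 0 ≤ j ≤ r + 1, the number of codewords of P of Hamming weight exactly j equals C(r+1, j) · ((q−1)^j + (−1)^j · (q−1)) / q, where C(·,·) is the binomial coefficient. -/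
/-!
A codeword of weight `j` is a choice of support `S` (one of `C(r+1, j)` sets) together with a
nowhere-zero zero-sum vector on `S`. Let `a n` count the nowhere-zero zero-sum vectors of length
`n`. Dropping the first coordinate (which is minus the sum of the others) matches those of length
`n + 1` with the nowhere-zero vectors of length `n` and nonzero sum, so
`a (n + 1) + a n = (q - 1) ^ n`, which solves to `a n = ((q - 1) ^ n + (-1) ^ n (q - 1)) / q`.
-/

open Finset

theorem card_filter_forall_ne_zero {M ι : Type*} [Zero M] [Fintype M] [DecidableEq M]
    [Fintype ι] [DecidableEq ι] :
    #{x : ι → M | ∀ i, x i ≠ 0} = (Fintype.card M - 1) ^ Fintype.card ι := by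
  have : ({x : ι → M | ∀ i, x i ≠ 0} : Finset _) = Fintype.piFinset fun _ => {0}ᶜ := by
    ext; simp
  simp [this, card_compl]

section

variable (G : Type*) [AddCommGroup G] [Fintype G] [DecidableEq G]

def fullWeightCount (ι : Type*) [Fintype ι] [DecidableEq ι] : ℕ :=
  #{x : ι → G | (∀ i, x i ≠ 0) ∧ ∑ i, x i = 0}

variable {G} {ι κ : Type*} [Fintype ι] [DecidableEq ι] [Fintype κ] [DecidableEq κ]

theorem fullWeightCount_congr (e : ι ≃ κ) : fullWeightCount G ι = fullWeightCount G κ :=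
  card_equiv (e.arrowCongr (.refl G)) fun x => by
    simp [e.symm.forall_congr_left, ← e.symm.sum_comp]

theorem fullWeightCount_succ_add (n : ℕ) :
    fullWeightCount G (Fin (n + 1)) + fullWeightCount G (Fin n)
      = (Fintype.card G - 1) ^ n := by
  have tail_bij : fullWeightCount G (Fin (n + 1))
      = #{z : Fin n → G | (∀ i, z i ≠ 0) ∧ ¬∑ i, z i = 0} := by
    refine card_nbij' Fin.tail (fun z => Fin.cons (-∑ i, z i) z) ?_ ?_ ?_ ?_
    all_goals simp only [coe_filter, Set.mem_ofPred_eq, mem_univ, true_and, Fin.sum_univ_succ,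
      Fin.forall_fin_succ, Fin.cons_zero, Fin.cons_succ, Fin.tail, Set.MapsTo, Set.LeftInvOn]
    · rintro y ⟨⟨h0, hsucc⟩, hsum⟩
      rw [add_eq_zero_iff_eq_neg'] at hsum
      exact ⟨hsucc, by simpa [hsum] using h0⟩
    · rintro z ⟨hz, hsum⟩
      exact ⟨⟨neg_ne_zero.2 hsum, hz⟩, neg_add_cancel _⟩
    · rintro y ⟨-, hsum⟩
      rw [add_eq_zero_iff_neg_eq] at hsum
      rw [← hsum, neg_neg]
      exact Fin.cons_self_tail y
    · intro z _
      exact Fin.tail_cons _ _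
  rw [tail_bij, fullWeightCount, add_comm, ← filter_filter, ← filter_filter]
  convert card_filter_add_card_filter_not (fun x : Fin n → G => ∑ i, x i = 0)
  rw [card_filter_forall_ne_zero, Fintype.card_fin]

theorem fullWeightCount_fin (n : ℕ) :
    (fullWeightCount G (Fin n) : ℚ) =
      (((Fintype.card G : ℚ) - 1) ^ n + (-1) ^ n * ((Fintype.card G : ℚ) - 1))
        / Fintype.card G := by
  have hG : (Fintype.card G : ℚ) ≠ 0 := by simp
  induction n with
  | zero => simp [fullWeightCount]
  | succ n ih =>
    have h := congrArg (Nat.cast : ℕ → ℚ) (fullWeightCount_succ_add (G := G) n)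
    push_cast [Nat.cast_sub Fintype.card_pos] at h
    rw [eq_sub_of_add_eq h, ih]
    field_simp
    ring

theorem card_zeroSum_support_eq (S : Finset ι) :
    #{x : ι → G | ∑ i, x i = 0 ∧ ({i | x i ≠ 0} : Finset ι) = S} = fullWeightCount G S := by
  refine card_nbij' (fun x s => x s) (fun y i => if h : i ∈ S then y ⟨i, h⟩ else 0) ?_ ?_ ?_ ?_
  all_goals simp only [coe_filter, Set.mem_ofPred_eq, mem_univ, true_and, Set.MapsTo,
    Set.LeftInvOn]
  · rintro x ⟨hsum, rfl⟩
    refine ⟨fun s => (mem_filter.1 s.2).2, ?_⟩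
    rw [sum_coe_sort _ (fun i => x i), sum_filter_ne_zero, hsum]
  · rintro y ⟨hy, hsum⟩
    refine ⟨by rw [← sum_attach_eq_sum_dite, ← univ_eq_attach, hsum], ?_⟩
    ext i
    by_cases h : i ∈ S <;> simp [h, hy]
  · rintro x ⟨-, rfl⟩
    funext i
    by_cases h : x i = 0 <;> simp [h]
  · intro y _
    simp

theorem card_zeroSum_hammingNorm_eq (j : ℕ) :
    #{x : ι → G | ∑ i, x i = 0 ∧ hammingNorm x = j}
      = (Fintype.card ι).choose j * fullWeightCount G (Fin j) := by
  rw [card_eq_sum_card_fiberwise (f := fun x => ({i | x i ≠ 0} : Finset ι))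
      (t := powersetCard j univ) fun x hx => mem_powersetCard_univ.2 (mem_filter.1 hx).2.2,
    ← card_univ, ← card_powersetCard, ← smul_eq_mul, ← sum_const]
  refine sum_congr rfl fun S hS => ?_
  rw [mem_powersetCard_univ] at hS
  rw [← fullWeightCount_congr (S.equivFin.trans (finCongr hS)), ← card_zeroSum_support_eq,
    filter_filter]
  congr 1
  refine filter_congr fun x _ => ⟨fun h => ⟨h.1.1, h.2⟩, fun h => ⟨⟨h.1, ?_⟩, h.2⟩⟩
  rw [hammingNorm, h.2, hS]

end

theorem stmt_9_general (q r j : ℕ)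
    (F : Type) [Field F] [Fintype F] [DecidableEq F] (hq : Fintype.card F = q) :
    ((Finset.univ.filter
        (fun x : Fin (r + 1) → F => (∑ i, x i) = 0 ∧ hammingNorm x = j)).card : ℚ)
      = ((r + 1).choose j : ℚ) *
          (((q : ℚ) - 1) ^ j + (-1) ^ j * ((q : ℚ) - 1)) / (q : ℚ) := by
  rw [card_zeroSum_hammingNorm_eq, Nat.cast_mul, fullWeightCount_fin, hq, Fintype.card_fin,
    mul_div_assoc]

/-- Weight distribution of the `q`-ary single parity-check code of
length `r + 1` (over a finite field `F` of cardinality `q`): the number of codewords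
of Hamming weight exactly `j` equals `C(r+1, j) · ((q-1)^j + (-1)^j (q-1)) / q`. -/
theorem stmt_9 (q r j : ℕ) (hr : 1 ≤ r) (hj : j ≤ r + 1)
    (F : Type) [Field F] [Fintype F] [DecidableEq F] (hq : Fintype.card F = q) :
    ((Finset.univ.filter
        (fun x : Fin (r + 1) → F => (∑ i, x i) = 0 ∧ hammingNorm x = j)).card : ℚ)
      = ((r + 1).choose j : ℚ) *
          (((q : ℚ) - 1) ^ j + (-1) ^ j * ((q : ℚ) - 1)) / (q : ℚ) :=
  stmt_9_general q r j F hq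
end

section
/- Let q be a prime power, r ≥ 1 an integer, and n, k, d positive integers with (r+1) dividing n and r dividing k. Suppose there exists a real number x with 0 < x ≤ 1 such that q^(k−n) · x^(−d) · (1 + x·(q−1))^n · (1 + (q−1) · ((1−x)/(1 + x·(q−1)))^(r+1))^(n/(r+1)) < 1. Then there exists a code C ⊆ F_q^n with exactly q^k codewords such that any two distinct codewords are at Hamming distance at least d and C is r-locally recoverable. -/
/-!
The words of length `n = (r + 1) m` whose `m` blocks of `r + 1` symbols each sum to zero form a
code `P` with `|P| = q ^ (r m)` in which every symbol is determined by the other `r` symbols of its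
block, and every subset of `P` inherits this locality. By Rankin's trick a Hamming ball of radius
`d - 1` around a word of `P` contains at most `x ^ (-d) W(x) ^ m` words of `P`, where `W` is the
weight enumerator of the single parity-check code of length `r + 1`. The hypothesis says exactly
that `q ^ k` such balls cannot cover `P`, so a greedy choice yields `q ^ k` words of `P` at pairwise
distance at least `d`.
-/

open Finset

section WeightEnumerator

variable {F : Type*} [AddCommGroup F] [Fintype F] [DecidableEq F]

omit [Fintype F] in
lemma pow_hammingNorm_eq_prod {ι M : Type*} [Fintype ι] [CommMonoid M] (x : M) (v : ι → F) :
    x ^ hammingNorm v = ∏ i, if v i = 0 then 1 else x := by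
  rw [prod_ite, prod_const_one, one_mul, prod_const]
  rfl

lemma sum_ite_eq_zero_one_else (x : ℝ) :
    ∑ c : F, (if c = 0 then 1 else x) = 1 + ((Fintype.card F : ℝ) - 1) * x := by
  have h : ∀ c : F, (if c = 0 then 1 else x) = x + if c = 0 then 1 - x else 0 := by
    intro c; split_ifs <;> ring
  simp only [h, sum_add_distrib, sum_const, card_univ, nsmul_eq_mul, sum_ite_eq', mem_univ,
    if_true]
  ring

lemma sum_pow_hammingNorm {ι : Type*} [Fintype ι] [DecidableEq ι] (x : ℝ) :
    ∑ v : ι → F, x ^ hammingNorm v = (1 + ((Fintype.card F : ℝ) - 1) * x) ^ Fintype.card ι := by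
  simp only [pow_hammingNorm_eq_prod]
  rw [← Fintype.prod_sum fun (_ : ι) (c : F) => if c = 0 then 1 else x, sum_ite_eq_zero_one_else,
    prod_const, card_univ]

/-- Closed form of the weight enumerator `∑ x ^ hammingNorm u` of the `q`-ary single parity-check
code of length `t` (see `sum_pow_hammingNorm_of_sum_eq_zero`). -/
noncomputable def parityWeightEnum (q : ℝ) (t : ℕ) (x : ℝ) : ℝ :=
  ((1 + (q - 1) * x) ^ t + (q - 1) * (1 - x) ^ t) / q

lemma parityWeightEnum_nonneg {q x : ℝ} (hq : 1 ≤ q) (hx0 : 0 ≤ x) (hx1 : x ≤ 1) (t : ℕ) :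
    0 ≤ parityWeightEnum q t x := by
  have hq' : 0 ≤ q - 1 := sub_nonneg.2 hq
  have hx' : 0 ≤ 1 - x := sub_nonneg.2 hx1
  unfold parityWeightEnum
  positivity

lemma sum_pow_hammingNorm_of_sum_eq_zero (x : ℝ) (t : ℕ) :
    ∑ u : Fin t → F with ∑ j, u j = 0, x ^ hammingNorm u =
      parityWeightEnum (Fintype.card F) t x := by
  have hq : (Fintype.card F : ℝ) ≠ 0 := by exact_mod_cast Fintype.card_ne_zero
  induction t with
  | zero => simp [parityWeightEnum, hammingNorm]
  | succ t ih =>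
    -- the first symbol is forced to be `-∑ j, u j`, where `u` is an arbitrary word of length `t`
    have hcons : ∑ u : Fin (t + 1) → F with ∑ j, u j = 0, x ^ hammingNorm u =
        ∑ u : Fin t → F, (x + if ∑ j, u j = 0 then 1 - x else 0) * x ^ hammingNorm u := by
      rw [sum_filter, ← (Fin.consEquiv fun _ => F).sum_comp, Fintype.sum_prod_type, sum_comm]
      refine sum_congr rfl fun u _ => ?_
      simp only [Fin.consEquiv_apply, Fin.sum_univ_succ, Fin.cons_zero, Fin.cons_succ,
        add_eq_zero_iff_eq_neg, sum_ite_eq', mem_univ, if_true, pow_hammingNorm_eq_prod x,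
        Fin.prod_univ_succ, neg_eq_zero]
      split_ifs <;> ring
    rw [hcons]
    simp only [add_mul, sum_add_distrib, ← mul_sum, sum_pow_hammingNorm, Fintype.card_fin,
      ite_mul, zero_mul, ← sum_filter, ih, parityWeightEnum]
    field_simp
    ring

variable (β : Type*) [Fintype β] [DecidableEq β]

/-- The concatenation of the trivial outer code `(F ^ (t - 1)) ^ β` with the inner single
parity-check code of length `t`. -/
def blockParityCode (t : ℕ) : Finset (β × Fin t → F) :=
  {v | ∀ b, ∑ j, v (b, j) = 0}

variable {β}

lemma sum_pow_hammingNorm_blockParityCode (x : ℝ) (t : ℕ) :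
    ∑ v ∈ blockParityCode (F := F) β t, x ^ hammingNorm v =
      parityWeightEnum (Fintype.card F) t x ^ Fintype.card β := by
  have hblocks : ∀ v : β × Fin t → F, (if ∀ b, ∑ j, v (b, j) = 0 then x ^ hammingNorm v else 0) =
      ∏ b, if ∑ j, v (b, j) = 0 then x ^ hammingNorm (fun j => v (b, j)) else 0 := by
    intro v
    simp only [Fintype.prod_ite_zero, pow_hammingNorm_eq_prod x, Fintype.prod_prod_type]
  rw [blockParityCode, sum_filter, ← sum_pow_hammingNorm_of_sum_eq_zero, sum_filter,
    ← card_univ, ← prod_const, Fintype.prod_sum]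
  simp only [hblocks]
  exact ((Equiv.curry β (Fin t) F).symm.sum_comp _).symm

lemma card_blockParityCode (t : ℕ) :
    #(blockParityCode (F := F) β (t + 1)) = Fintype.card F ^ (t * Fintype.card β) := by
  have hq : (Fintype.card F : ℝ) ≠ 0 := by exact_mod_cast Fintype.card_ne_zero
  have h := sum_pow_hammingNorm_blockParityCode (F := F) (β := β) 1 (t + 1)
  simp only [one_pow, sum_const, nsmul_one, parityWeightEnum, sub_self, zero_pow t.succ_ne_zero,
    mul_zero, add_zero, mul_one, add_sub_cancel] at h
  rw [pow_succ, mul_div_cancel_right₀ _ hq, ← pow_mul] at h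
  exact_mod_cast h

lemma sub_mem_blockParityCode {t : ℕ} {v w : β × Fin t → F} (hv : v ∈ blockParityCode β t)
    (hw : w ∈ blockParityCode β t) : v - w ∈ blockParityCode β t := by
  simp only [blockParityCode, mem_filter, mem_univ, true_and, Pi.sub_apply, sum_sub_distrib] at *
  intro b
  rw [hv b, hw b, sub_self]

end WeightEnumerator

section GilbertVarshamov

variable {ι G : Type*} [Fintype ι] [DecidableEq G]

/-- Rankin's trick: every word of the ball contributes at least `x ^ d` to the weight enumerator
of the translate `P - c = P`. -/
lemma card_ball_mul_pow_le [AddCommGroup G] {P : Finset (ι → G)}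
    (hP : ∀ v ∈ P, ∀ w ∈ P, v - w ∈ P) {c : ι → G} (hc : c ∈ P) {x : ℝ} (hx0 : 0 ≤ x)
    (hx1 : x ≤ 1) (d : ℕ) :
    #{v ∈ P | hammingDist v c < d} * x ^ d ≤ ∑ w ∈ P, x ^ hammingNorm w := by
  have hneg : -c ∈ P := by simpa using hP _ (hP c hc c hc) c hc
  calc (#{v ∈ P | hammingDist v c < d} : ℝ) * x ^ d
      = ∑ v ∈ P with hammingDist v c < d, x ^ d := by rw [sum_const, nsmul_eq_mul]
    _ ≤ ∑ v ∈ P with hammingDist v c < d, x ^ hammingDist v c :=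
        sum_le_sum fun v hv => pow_le_pow_of_le_one hx0 hx1 (mem_filter.1 hv).2.le
    _ ≤ ∑ v ∈ P, x ^ hammingDist v c :=
        sum_le_sum_of_subset_of_nonneg (filter_subset _ _) fun _ _ _ => by positivity
    _ = ∑ w ∈ P, x ^ hammingNorm w := by
        simp only [hammingDist_comm _ c, hammingDist_eq_hammingNorm, neg_add_eq_sub]
        exact sum_nbij' (· - c) (· + c) (fun v hv => hP v hv c hc)
          (fun w hw => by simpa using hP w hw _ hneg) (fun v _ => sub_add_cancel v c)
          (fun w _ => add_sub_cancel_right w c) fun _ _ => rfl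

/-- The greedy Gilbert–Varshamov construction. -/
lemma exists_subset_card_eq_pairwise_hammingDist (P : Finset (ι → G)) {d : ℕ} (hd : 0 < d)
    {B : ℝ} (hB : 0 ≤ B) (hball : ∀ c ∈ P, (#{v ∈ P | hammingDist v c < d} : ℝ) ≤ B) (N : ℕ)
    (hN : N * B < #P) :
    ∃ C ⊆ P, #C = N ∧ (C : Set (ι → G)).Pairwise fun X Y => d ≤ hammingDist X Y := by
  induction N with
  | zero => exact ⟨∅, empty_subset P, card_empty, by simp⟩
  | succ N ih =>
    obtain ⟨C, hCP, hCcard, hCdist⟩ := ih (by push_cast at hN; linarith)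
    obtain ⟨p, hpP, hpC⟩ : ∃ p ∈ P, ∀ c ∈ C, d ≤ hammingDist p c := by
      by_contra! hcover
      have hsub : P ⊆ C.biUnion fun c => {v ∈ P | hammingDist v c < d} := fun p hp => by
        obtain ⟨c, hc, hpc⟩ := hcover p hp
        exact mem_biUnion.2 ⟨c, hc, mem_filter.2 ⟨hp, hpc⟩⟩
      have hle : (#P : ℝ) ≤ ∑ c ∈ C, (#{v ∈ P | hammingDist v c < d} : ℝ) := by
        exact_mod_cast (card_le_card hsub).trans card_biUnion_le
      have hsum := sum_le_sum fun c hc => hball c (hCP hc)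
      rw [sum_const, hCcard, nsmul_eq_mul] at hsum
      push_cast at hN
      linarith
    have hpC' : p ∉ C := fun hp => by simpa [hammingDist_self] using (hpC p hp).trans_lt' hd
    refine ⟨insert p C, insert_subset hpP hCP, by rw [card_insert_of_notMem hpC', hCcard], ?_⟩
    rw [coe_insert]
    exact hCdist.insert fun c hc _ => ⟨hpC c hc, hammingDist_comm p c ▸ hpC c hc⟩

end GilbertVarshamov

section Locality

variable {ι κ F : Type*}

def IsLocallyRecoverable (C : Finset (ι → F)) (r : ℕ) : Prop :=
  ∀ i, ∃ R : Finset ι, i ∉ R ∧ #R = r ∧ ∀ X ∈ C, ∀ Y ∈ C, X i ≠ Y i → ∃ l ∈ R, X l ≠ Y l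

lemma IsLocallyRecoverable.mono {C D : Finset (ι → F)} {r : ℕ} (hC : IsLocallyRecoverable C r)
    (hDC : D ⊆ C) : IsLocallyRecoverable D r := fun i =>
  let ⟨R, hiR, hR, hrec⟩ := hC i
  ⟨R, hiR, hR, fun X hX Y hY => hrec X (hDC hX) Y (hDC hY)⟩

lemma IsLocallyRecoverable.map_arrowCongr {C : Finset (κ → F)} {r : ℕ}
    (hC : IsLocallyRecoverable C r) (e : κ ≃ ι) :
    IsLocallyRecoverable (C.map (e.arrowCongr (Equiv.refl F)).toEmbedding) r := by
  intro i
  obtain ⟨R, hiR, hR, hrec⟩ := hC (e.symm i)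
  refine ⟨R.map e.toEmbedding, by simpa [← e.eq_symm_apply] using hiR, by rw [card_map, hR], ?_⟩
  simp only [mem_map]
  rintro _ ⟨X, hX, rfl⟩ _ ⟨Y, hY, rfl⟩ hne
  obtain ⟨l, hl, hXY⟩ := hrec X hX Y hY (by simpa using hne)
  exact ⟨e l, ⟨l, hl, rfl⟩, by simpa using hXY⟩

lemma exists_ne_of_sum_eq_sum {M : Type*} [AddCancelCommMonoid M] [Fintype κ] [DecidableEq κ]
    {u v : κ → M} (h : ∑ j, u j = ∑ j, v j) {j₀ : κ} (hj₀ : u j₀ ≠ v j₀) :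
    ∃ j ≠ j₀, u j ≠ v j := by
  by_contra! hagree
  rw [← add_sum_erase _ _ (mem_univ j₀), ← add_sum_erase _ _ (mem_univ j₀),
    sum_congr rfl fun j hj => hagree j (ne_of_mem_erase hj)] at h
  exact hj₀ (add_right_cancel h)

lemma isLocallyRecoverable_blockParityCode [AddCommGroup F] [Fintype F] [DecidableEq F]
    [Fintype κ] [DecidableEq κ] (t : ℕ) :
    IsLocallyRecoverable (blockParityCode (F := F) κ (t + 1)) t := by
  rintro ⟨b, j₀⟩
  refine ⟨(univ.erase j₀).map (Function.Embedding.sectR b _), by simp, by simp, ?_⟩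
  intro X hX Y hY hne
  simp only [blockParityCode, mem_filter, mem_univ, true_and] at hX hY
  obtain ⟨j, hj, hXY⟩ := exists_ne_of_sum_eq_sum (u := fun j => X (b, j)) (v := fun j => Y (b, j))
    (by rw [hX b, hY b]) hne
  exact ⟨(b, j), by simpa using hj, hXY⟩

end Locality

section Reindexing

variable {ι κ F : Type*} [Fintype ι] [Fintype κ] [DecidableEq F]

lemma hammingDist_arrowCongr (e : κ ≃ ι) (v w : κ → F) :
    hammingDist (e.arrowCongr (Equiv.refl F) v) (e.arrowCongr (Equiv.refl F) w) =
      hammingDist v w :=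
  card_equiv e.symm fun i => by simp

lemma Set.Pairwise.map_arrowCongr {C : Finset (κ → F)} {d : ℕ}
    (hC : (C : Set (κ → F)).Pairwise fun X Y => d ≤ hammingDist X Y) (e : κ ≃ ι) :
    (C.map (e.arrowCongr (Equiv.refl F)).toEmbedding : Set (ι → F)).Pairwise
      fun X Y => d ≤ hammingDist X Y := by
  rw [coe_map]
  rintro _ ⟨X, hX, rfl⟩ _ ⟨Y, hY, rfl⟩ hne
  rw [Equiv.toEmbedding_apply, Equiv.toEmbedding_apply, hammingDist_arrowCongr]
  exact hC hX hY (ne_of_apply_ne _ hne)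

end Reindexing

/-- The left side of the hypothesis of `stmt_11` is `q ^ k * B / |P|`, where `B` bounds the balls
of `P = blockParityCode (Fin m) (r + 1)` by `card_ball_mul_pow_le`. -/
lemma gv_condition_eq {Q x : ℝ} (hQ : 1 ≤ Q) (hx : 0 ≤ x) (k d r m : ℕ) :
    Q ^ ((k : ℤ) - (((r + 1) * m : ℕ) : ℤ)) * x ^ (-(d : ℤ)) * (1 + x * (Q - 1)) ^ ((r + 1) * m) *
        (1 + (Q - 1) * ((1 - x) / (1 + x * (Q - 1))) ^ (r + 1)) ^ m =
      Q ^ k * ((x ^ d)⁻¹ * parityWeightEnum Q (r + 1) x ^ m) / Q ^ (r * m) := by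
  have hu : 0 < 1 + x * (Q - 1) := by nlinarith
  have hblock : (1 + x * (Q - 1)) ^ (r + 1) *
      (1 + (Q - 1) * ((1 - x) / (1 + x * (Q - 1))) ^ (r + 1)) =
        Q * parityWeightEnum Q (r + 1) x := by
    rw [parityWeightEnum, div_pow]
    field_simp
  rw [pow_mul, mul_assoc _ (_ ^ m), ← mul_pow, hblock, zpow_sub₀ (by positivity), zpow_natCast,
    zpow_natCast, zpow_neg, zpow_natCast, mul_pow, add_mul, one_mul, pow_add]
  field_simp

theorem stmt_11_general (q r n k d : ℕ) (hd : 1 ≤ d)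
    (hrn : (r + 1) ∣ n)
    (F : Type) [Field F] [Fintype F] [DecidableEq F] (hq : Fintype.card F = q)
    (x : ℝ) (hx0 : 0 < x) (hx1 : x ≤ 1)
    (hlt : (q : ℝ) ^ ((k : ℤ) - (n : ℤ)) * x ^ (-(d : ℤ)) *
        (1 + x * ((q : ℝ) - 1)) ^ n *
        (1 + ((q : ℝ) - 1) * ((1 - x) / (1 + x * ((q : ℝ) - 1))) ^ (r + 1)) ^ (n / (r + 1))
      < 1) :
    ∃ C : Finset (Fin n → F), C.card = q ^ k ∧
      (∀ X ∈ C, ∀ Y ∈ C, X ≠ Y → d ≤ hammingDist X Y) ∧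
      (∀ i : Fin n, ∃ R : Finset (Fin n), i ∉ R ∧ R.card = r ∧
        ∀ X ∈ C, ∀ Y ∈ C, X i ≠ Y i → ∃ l ∈ R, X l ≠ Y l) := by
  obtain ⟨m, rfl⟩ := hrn
  subst hq
  set P := blockParityCode (F := F) (Fin m) (r + 1)
  have hQ : (1 : ℝ) ≤ Fintype.card F := by exact_mod_cast Fintype.card_pos
  rw [Nat.mul_div_cancel_left m r.succ_pos, gv_condition_eq hQ hx0.le, div_lt_one (by positivity)]
    at hlt
  have hball : ∀ c ∈ P, (#{v ∈ P | hammingDist v c < d} : ℝ) ≤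
      (x ^ d)⁻¹ * parityWeightEnum (Fintype.card F) (r + 1) x ^ m := fun c hc => by
    have := card_ball_mul_pow_le (fun v hv w hw => sub_mem_blockParityCode hv hw) hc hx0.le hx1 d
    rw [sum_pow_hammingNorm_blockParityCode, Fintype.card_fin] at this
    rwa [inv_mul_eq_div, le_div_iff₀ (by positivity)]
  obtain ⟨C, hCP, hCcard, hCdist⟩ := exists_subset_card_eq_pairwise_hammingDist P hd
    (by have := parityWeightEnum_nonneg hQ hx0.le hx1 (r + 1); positivity) hball
    (Fintype.card F ^ k) (by rw [card_blockParityCode, Fintype.card_fin]; push_cast; exact hlt)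
  let e : Fin m × Fin (r + 1) ≃ Fin ((r + 1) * m) := finProdFinEquiv.trans (finCongr (mul_comm _ _))
  exact ⟨C.map (e.arrowCongr (Equiv.refl F)).toEmbedding, by rw [card_map, hCcard],
    hCdist.map_arrowCongr e, ((isLocallyRecoverable_blockParityCode r).mono hCP).map_arrowCongr e⟩

/-- (Theorem on concatenated codes with random linear outer code.)
If for some `0 < x ≤ 1` the quantity
`q^{k-n} x^{-d} (1 + x(q-1))^n (1 + (q-1)((1-x)/(1+x(q-1)))^{r+1})^{n/(r+1)}`
is less than 1, then there exists a `q`-ary code of length `n` with exactly `q^k`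
codewords, minimum distance at least `d`, and locality `r`. -/
theorem stmt_11 (q r n k d : ℕ) (hr : 1 ≤ r) (hn : 1 ≤ n) (hk : 1 ≤ k) (hd : 1 ≤ d)
    (hrn : (r + 1) ∣ n) (hrk : r ∣ k)
    (F : Type) [Field F] [Fintype F] [DecidableEq F] (hq : Fintype.card F = q)
    (x : ℝ) (hx0 : 0 < x) (hx1 : x ≤ 1)
    (hlt : (q : ℝ) ^ ((k : ℤ) - (n : ℤ)) * x ^ (-(d : ℤ)) *
        (1 + x * ((q : ℝ) - 1)) ^ n *
        (1 + ((q : ℝ) - 1) * ((1 - x) / (1 + x * ((q : ℝ) - 1))) ^ (r + 1)) ^ (n / (r + 1))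
      < 1) :
    ∃ C : Finset (Fin n → F), C.card = q ^ k ∧
      (∀ X ∈ C, ∀ Y ∈ C, X ≠ Y → d ≤ hammingDist X Y) ∧
      (∀ i : Fin n, ∃ R : Finset (Fin n), i ∉ R ∧ R.card = r ∧
        ∀ X ∈ C, ∀ Y ∈ C, X i ≠ Y i → ∃ l ∈ R, X l ≠ Y l) :=
  stmt_11_general q r n k d hd hrn F hq x hx0 hx1 hlt
end

section
/- Let q be a prime power, r ≥ 1 an integer, n a positive integer with (r+1) dividing n, and let M ≥ 2 and d ≥ 1 be integers. Suppose there exists a real number x with 0 < x ≤ 1 such that e · (2M − 1) · x^(−d) · q^(−n) · ((1 + x·(q−1))^(r+1) + (q−1)·(1 − x)^(r+1))^(n/(r+1)) < 1, where e is Euler's number. Then there exists a code C ⊆ F_q^n with exactly M codewords such that any two distinct codewords are at Hamming distance at least d, and C is r-locally recoverable: it can be taken inside the set of words partitioned into n/(r+1) blocks of length r+1 in which the last symbol of each block is the sum of the other r symbols of that block. -/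
/-!
The factor `e (2M - 1)` coming from the Local Lemma is more than a greedy (Gilbert–Varshamov)
choice needs: codewords can be picked one at a time inside the parity-block code `E`, which has
`q ^ (r b)` words, as long as `M - 1` Hamming balls of radius `d - 1` do not cover `E`. By
Markov's inequality with weight `x ^ dist` (`0 < x ≤ 1`), a ball holds at most
`x⁻ᵈ ∑_{z ∈ E} x ^ wt z` codewords. This weight enumerator factors over the `b = n / (r + 1)`
blocks, each contributing `∑_{v : Fin r → F} x ^ wt (v, ∑ v)`, which equals
`((1 + x (q - 1)) ^ (r + 1) + (q - 1) (1 - x) ^ (r + 1)) / q`.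
Locality: within a block, each symbol is determined by the other `r` through the parity relation.
-/

open Finset

section SymbolWeight

variable {G : Type*} [AddCommGroup G] [DecidableEq G]

noncomputable def symbolWeight (x : ℝ) (c : G) : ℝ := if c = 0 then 1 else x

lemma symbolWeight_nonneg {x : ℝ} (hx : 0 ≤ x) (c : G) : 0 ≤ symbolWeight x c := by
  unfold symbolWeight; split_ifs <;> simp [hx]

lemma symbolWeight_eq (x : ℝ) (c : G) :
    symbolWeight x c = x + if c = 0 then 1 - x else 0 := by
  unfold symbolWeight; split_ifs <;> ring

lemma prod_symbolWeight_sub {ι : Type*} [Fintype ι] (x : ℝ) (z y : ι → G) :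
    ∏ i, symbolWeight x (z i - y i) = x ^ hammingDist z y := by
  rw [hammingDist, ← prod_const, prod_filter]
  refine prod_congr rfl fun i _ => ?_
  simp only [symbolWeight, sub_eq_zero]
  split_ifs <;> simp_all

variable [Fintype G]

lemma sum_symbolWeight_mul (x : ℝ) (ψ : G → ℝ) :
    ∑ c, symbolWeight x c * ψ c = x * ∑ c, ψ c + (1 - x) * ψ 0 := by
  simp only [symbolWeight_eq, add_mul, ite_mul, zero_mul, sum_add_distrib, ← mul_sum,
    sum_ite_eq', mem_univ, if_true]

lemma sum_symbolWeight (x : ℝ) :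
    ∑ c : G, symbolWeight x c = 1 + x * (Fintype.card G - 1) := by
  have h := sum_symbolWeight_mul x (fun _ : G => (1 : ℝ))
  simp only [mul_one, sum_const, card_univ, nsmul_eq_mul] at h
  rw [h]; ring

noncomputable def twistedWeightEnum (x : ℝ) (m : ℕ) (ψ : G → ℝ) : ℝ :=
  ∑ v : Fin m → G, (∏ j, symbolWeight x (v j)) * ψ (∑ j, v j)

lemma twistedWeightEnum_nonneg {x : ℝ} (hx : 0 ≤ x) (m : ℕ) {ψ : G → ℝ}
    (hψ : 0 ≤ ψ) : 0 ≤ twistedWeightEnum x m ψ :=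
  sum_nonneg fun _ _ => mul_nonneg (prod_nonneg fun _ _ => symbolWeight_nonneg hx _) (hψ _)

lemma twistedWeightEnum_succ (x : ℝ) (m : ℕ) (ψ : G → ℝ) :
    twistedWeightEnum x (m + 1) ψ
      = twistedWeightEnum x m fun t => ∑ c, symbolWeight x c * ψ (c + t) := by
  unfold twistedWeightEnum
  rw [← (Fin.consEquiv fun _ => G).sum_comp, Fintype.sum_prod_type, sum_comm]
  refine sum_congr rfl fun v _ => ?_
  rw [mul_sum]
  refine sum_congr rfl fun c _ => ?_
  simp only [Fin.consEquiv, Equiv.coe_fn_mk, Fin.prod_univ_succ, Fin.sum_univ_succ,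
    Fin.cons_zero, Fin.cons_succ]
  ring

/- Peeling off a coordinate convolves `ψ` with `symbolWeight x`; the closed form depends on `ψ`
only through `∑ s, ψ s` and `ψ 0`, and the convolution transforms these two numbers linearly. -/
lemma card_mul_twistedWeightEnum (x : ℝ) (m : ℕ) (ψ : G → ℝ) :
    Fintype.card G * twistedWeightEnum x m ψ
      = ((1 + x * (Fintype.card G - 1)) ^ m - (1 - x) ^ m) * ∑ s, ψ s
        + Fintype.card G * (1 - x) ^ m * ψ 0 := by
  induction m generalizing ψ with
  | zero => simp [twistedWeightEnum]
  | succ m ih =>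
    have hsum : ∑ t, ∑ c, symbolWeight x c * ψ (c + t)
        = (1 + x * (Fintype.card G - 1)) * ∑ s, ψ s := by
      rw [sum_comm, ← sum_symbolWeight x, sum_mul]
      refine sum_congr rfl fun c _ => ?_
      rw [← mul_sum]
      exact congrArg _ (Equiv.sum_comp (Equiv.addLeft c) ψ)
    have hzero : ∑ c, symbolWeight x c * ψ (c + 0) = x * ∑ s, ψ s + (1 - x) * ψ 0 := by
      simpa only [add_zero] using sum_symbolWeight_mul x ψ
    rw [twistedWeightEnum_succ, ih, hsum, hzero]
    ring

lemma card_mul_twistedWeightEnum_symbolWeight (x : ℝ) (r : ℕ) :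
    Fintype.card G * twistedWeightEnum x r (symbolWeight x : G → ℝ)
      = (1 + x * (Fintype.card G - 1)) ^ (r + 1)
        + (Fintype.card G - 1) * (1 - x) ^ (r + 1) := by
  rw [card_mul_twistedWeightEnum, sum_symbolWeight]
  simp only [symbolWeight, if_true]
  ring

end SymbolWeight

section HammingBall

variable {ι β : Type*} [Fintype ι] [DecidableEq β]

lemma card_filter_hammingDist_lt_mul_pow_le {x : ℝ} (hx0 : 0 ≤ x) (hx1 : x ≤ 1)
    (S : Finset (ι → β)) (y : ι → β) (d : ℕ) :
    #{z ∈ S | hammingDist z y < d} * x ^ d ≤ ∑ z ∈ S, x ^ hammingDist z y := by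
  rw [← nsmul_eq_mul, ← sum_const]
  calc ∑ _z ∈ S with hammingDist _z y < d, x ^ d
      ≤ ∑ z ∈ S with hammingDist z y < d, x ^ hammingDist z y :=
        sum_le_sum fun z hz => pow_le_pow_of_le_one hx0 hx1 (mem_filter.1 hz).2.le
    _ ≤ ∑ z ∈ S, x ^ hammingDist z y :=
        sum_le_sum_of_subset_of_nonneg (filter_subset _ _) fun z _ _ => pow_nonneg hx0 _

lemma exists_card_eq_pairwise_le_hammingDist {E : Finset (ι → β)} {d : ℕ} (hd : 0 < d)
    {V : ℝ} (hV : 0 ≤ V) (hball : ∀ y ∈ E, (#{z ∈ E | hammingDist z y < d} : ℝ) ≤ V)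
    (M : ℕ) (hM : M * V < #E) :
    ∃ C ⊆ E, #C = M + 1 ∧
      (C : Set (ι → β)).Pairwise fun X Y => d ≤ hammingDist X Y := by
  induction M with
  | zero =>
    have hE : (0 : ℝ) < #E := by simpa using hM
    obtain ⟨z, hz⟩ : E.Nonempty := card_pos.1 (by exact_mod_cast hE)
    exact ⟨{z}, singleton_subset_iff.2 hz, card_singleton z, by simp⟩
  | succ M ih =>
    obtain ⟨C, hCE, hCcard, hC⟩ := ih (lt_of_le_of_lt (by push_cast; nlinarith) hM)
    set covered := C.biUnion fun y => {z ∈ E | hammingDist z y < d}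
    have hcovered : (#covered : ℝ) ≤ (M + 1 : ℕ) * V :=
      calc (#covered : ℝ) ≤ ∑ y ∈ C, (#{z ∈ E | hammingDist z y < d} : ℝ) := by
            exact_mod_cast card_biUnion_le
        _ ≤ ∑ _y ∈ C, V := sum_le_sum fun y hy => hball y (hCE hy)
        _ = (M + 1 : ℕ) * V := by rw [sum_const, hCcard, nsmul_eq_mul]
    obtain ⟨z, hzE, hzfar⟩ :=
      exists_mem_notMem_of_card_lt_card (s := covered) (by exact_mod_cast hcovered.trans_lt hM)
    simp only [covered, mem_biUnion, mem_filter, not_exists, not_and, not_lt] at hzfar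
    have hzC : z ∉ C := fun hz => by simpa [hammingDist_self] using (hzfar z hz hzE).trans_lt' hd
    refine ⟨insert z C, insert_subset hzE hCE, by rw [card_insert_of_notMem hzC, hCcard], ?_⟩
    rw [coe_insert]
    exact hC.insert fun y hy _ =>
      ⟨hzfar y hy hzE, hammingDist_comm z y ▸ hzfar y hy hzE⟩

end HammingBall

section ParityCode

variable (G : Type*) [AddCommGroup G] (b r : ℕ)

def parityExtend : (Fin b → Fin r → G) →+ (Fin b × Fin (r + 1) → G) where
  toFun a p := Fin.snoc (α := fun _ => G) (a p.1) (∑ k, a p.1 k) p.2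
  map_zero' := by
    funext ⟨i, j⟩
    induction j using Fin.lastCases <;> simp
  map_add' a c := by
    funext ⟨i, j⟩
    induction j using Fin.lastCases <;> simp [sum_add_distrib]

lemma parityExtend_injective : Function.Injective (parityExtend G b r) := by
  intro a c h
  funext i j
  simpa [parityExtend] using congrFun h (i, j.castSucc)

variable [Fintype G] [DecidableEq G]

noncomputable def parityCode : Finset (Fin b × Fin (r + 1) → G) :=
  univ.image (parityExtend G b r)

lemma card_parityCode : #(parityCode G b r) = Fintype.card G ^ (r * b) := by
  rw [parityCode, card_image_of_injective _ (parityExtend_injective G b r), card_univ,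
    Fintype.card_fun, Fintype.card_fun, Fintype.card_fin, Fintype.card_fin, pow_mul]

variable {G b r}

lemma parityCode_apply_last {z : Fin b × Fin (r + 1) → G} (hz : z ∈ parityCode G b r)
    (i : Fin b) : z (i, Fin.last r) = ∑ j : Fin r, z (i, j.castSucc) := by
  obtain ⟨a, -, rfl⟩ := mem_image.1 hz
  simp [parityExtend]

/- The code is a group, so translating by `y` permutes it; the weight of a codeword is then a
product over its `b` blocks. -/
lemma sum_pow_hammingDist_parityCode (x : ℝ) {y : Fin b × Fin (r + 1) → G}
    (hy : y ∈ parityCode G b r) :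
    ∑ z ∈ parityCode G b r, x ^ hammingDist z y
      = twistedWeightEnum x r (symbolWeight x : G → ℝ) ^ b := by
  obtain ⟨c, -, rfl⟩ := mem_image.1 hy
  set w : (Fin b → Fin r → G) → ℝ := fun a => ∏ p, symbolWeight x (parityExtend G b r a p)
  have htranslate : ∑ a, w (a - c) = ∑ a, w a :=
    Fintype.sum_equiv (Equiv.subRight c) _ _ fun _ => rfl
  rw [parityCode, sum_image fun a _ a' _ h => parityExtend_injective G b r h]
  simp_rw [← prod_symbolWeight_sub, ← Pi.sub_apply, ← map_sub]
  rw [htranslate, twistedWeightEnum, ← Fin.prod_const, Fintype.prod_sum]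
  refine sum_congr rfl fun a _ => (Fintype.prod_prod_type _).trans (prod_congr rfl fun i _ => ?_)
  simp [parityExtend, Fin.prod_univ_castSucc]

lemma card_filter_hammingDist_lt_parityCode_le {x : ℝ} (hx0 : 0 < x) (hx1 : x ≤ 1)
    {y : Fin b × Fin (r + 1) → G} (hy : y ∈ parityCode G b r) (d : ℕ) :
    (#{z ∈ parityCode G b r | hammingDist z y < d} : ℝ)
      ≤ twistedWeightEnum x r (symbolWeight x : G → ℝ) ^ b / x ^ d := by
  rw [le_div_iff₀ (pow_pos hx0 d), ← sum_pow_hammingDist_parityCode x hy]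
  exact card_filter_hammingDist_lt_mul_pow_le hx0.le hx1 _ y d

lemma exists_subset_parityCode_card_eq_pairwise {x : ℝ} (hx0 : 0 < x) (hx1 : x ≤ 1)
    {d : ℕ} (hd : 0 < d) (M : ℕ)
    (hM : M * (twistedWeightEnum x r (symbolWeight x : G → ℝ) ^ b / x ^ d)
      < Fintype.card G ^ (r * b)) :
    ∃ C ⊆ parityCode G b r, #C = M + 1 ∧
      (C : Set (Fin b × Fin (r + 1) → G)).Pairwise fun X Y => d ≤ hammingDist X Y := by
  have hV : 0 ≤ twistedWeightEnum x r (symbolWeight x : G → ℝ) ^ b / x ^ d := by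
    have := twistedWeightEnum_nonneg hx0.le r (symbolWeight_nonneg (G := G) hx0.le)
    positivity
  refine exists_card_eq_pairwise_le_hammingDist hd hV
    (fun y hy => card_filter_hammingDist_lt_parityCode_le hx0 hx1 hy d) M ?_
  rwa [card_parityCode, Nat.cast_pow]

lemma snoc_sum_eq_zero_of_forall_ne {A : Type*} [AddCommMonoid A] (v : Fin r → A)
    (j : Fin (r + 1)) (h : ∀ k ≠ j, Fin.snoc (α := fun _ => A) v (∑ i, v i) k = 0) :
    Fin.snoc (α := fun _ => A) v (∑ i, v i) j = 0 := by
  induction j using Fin.lastCases with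
  | last =>
    simpa using sum_eq_zero fun i _ => by simpa using h i.castSucc (Fin.castSucc_lt_last i).ne
  | cast k =>
    have hsum : ∑ i, v i = v k :=
      sum_eq_single k (fun i _ hik => by
        simpa using h i.castSucc ((Fin.castSucc_injective r).ne hik)) (by simp)
    simpa [hsum] using h (Fin.last r) (Fin.castSucc_lt_last k).ne'

lemma exists_recoverySet_parityCode (p : Fin b × Fin (r + 1)) :
    ∃ R : Finset (Fin b × Fin (r + 1)), p ∉ R ∧ #R = r ∧
      ∀ X ∈ parityCode G b r, ∀ Y ∈ parityCode G b r,
        X p ≠ Y p → ∃ l ∈ R, X l ≠ Y l := by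
  obtain ⟨i, j⟩ := p
  refine ⟨{i} ×ˢ univ.erase j, by simp, by simp, ?_⟩
  simp only [parityCode, mem_image, mem_univ, true_and]
  rintro _ ⟨a, rfl⟩ _ ⟨c, rfl⟩ hne
  contrapose! hne
  rw [← sub_eq_zero, ← Pi.sub_apply, ← map_sub]
  refine snoc_sum_eq_zero_of_forall_ne _ j fun k hk => ?_
  change parityExtend G b r (a - c) (i, k) = 0
  rw [map_sub, Pi.sub_apply, sub_eq_zero]
  exact hne (i, k) (by simp [hk])

end ParityCode

theorem stmt_12_general (q r n M d : ℕ) (hrn : (r + 1) ∣ n)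
    (hM : 2 ≤ M) (hd : 1 ≤ d)
    (F : Type) [Field F] [Fintype F] [DecidableEq F] (hq : Fintype.card F = q)
    (x : ℝ) (hx0 : 0 < x) (hx1 : x ≤ 1)
    (hlt : Real.exp 1 * (2 * (M : ℝ) - 1) * x ^ (-(d : ℤ)) * (q : ℝ) ^ (-(n : ℤ)) *
        ((1 + x * ((q : ℝ) - 1)) ^ (r + 1)
          + ((q : ℝ) - 1) * (1 - x) ^ (r + 1)) ^ (n / (r + 1))
      < 1) :
    ∃ C : Finset (Fin (n / (r + 1)) × Fin (r + 1) → F), C.card = M ∧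
      (∀ X ∈ C, ∀ Y ∈ C, X ≠ Y → d ≤ hammingDist X Y) ∧
      (∀ X ∈ C, ∀ i : Fin (n / (r + 1)),
        X (i, Fin.last r) = ∑ j : Fin r, X (i, j.castSucc)) ∧
      (∀ i : Fin (n / (r + 1)) × Fin (r + 1),
        ∃ R : Finset (Fin (n / (r + 1)) × Fin (r + 1)), i ∉ R ∧ R.card = r ∧
          ∀ X ∈ C, ∀ Y ∈ C, X i ≠ Y i → ∃ l ∈ R, X l ≠ Y l) := by
  set b := n / (r + 1)
  set V := twistedWeightEnum x r (symbolWeight x : F → ℝ) ^ b / x ^ d with hV_def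
  have hq0 : (0 : ℝ) < q := by rw [← hq]; exact_mod_cast Fintype.card_pos
  have hV : 0 ≤ V := by
    have := twistedWeightEnum_nonneg hx0.le r (symbolWeight_nonneg (G := F) hx0.le)
    positivity
  have hH := card_mul_twistedWeightEnum_symbolWeight (G := F) x r
  rw [hq] at hH
  rw [← hH, mul_pow, zpow_neg, zpow_neg, zpow_natCast, zpow_natCast,
    show n = (r + 1) * b from (Nat.mul_div_cancel' hrn).symm, add_mul, one_mul, pow_add] at hlt
  have hexp : Real.exp 1 * (2 * M - 1) * V < q ^ (r * b) := by
    rw [← div_lt_one (by positivity)]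
    refine lt_of_eq_of_lt ?_ hlt
    rw [hV_def]
    field_simp
  have hcount : ((M - 1 : ℕ) : ℝ) * V < Fintype.card F ^ (r * b) := by
    rw [hq, Nat.cast_sub (by omega), Nat.cast_one]
    refine lt_of_le_of_lt (mul_le_mul_of_nonneg_right ?_ hV) hexp
    have hM' : (2 : ℝ) ≤ M := by exact_mod_cast hM
    nlinarith [Real.add_one_le_exp 1]
  obtain ⟨C, hCE, hCcard, hC⟩ :=
    exists_subset_parityCode_card_eq_pairwise hx0 hx1 hd (M - 1) hcount
  refine ⟨C, by omega, fun X hX Y hY hXY => hC hX hY hXY,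
    fun X hX => parityCode_apply_last (hCE hX), fun p => ?_⟩
  obtain ⟨R, hpR, hRcard, hR⟩ := exists_recoverySet_parityCode (G := F) p
  exact ⟨R, hpR, hRcard, fun X hX Y hY => hR X (hCE hX) Y (hCE hY)⟩

/-- (Random-coding theorem via the Lovász Local Lemma.)
Suppose `(r+1) ∣ n` and for some `0 < x ≤ 1`,
`e (2M - 1) x^{-d} q^{-n} ((1 + x(q-1))^{r+1} + (q-1)(1-x)^{r+1})^{n/(r+1)} < 1`.
Then there is a code with exactly `M` codewords, minimum distance at least `d`,
locality `r`, lying in the parity-block ensemble: words are made of `n/(r+1)` blocks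
of length `r+1`, the last symbol of each block being the sum of the other `r`. -/
theorem stmt_12 (q r n M d : ℕ) (hr : 1 ≤ r) (hn : 1 ≤ n) (hrn : (r + 1) ∣ n)
    (hM : 2 ≤ M) (hd : 1 ≤ d)
    (F : Type) [Field F] [Fintype F] [DecidableEq F] (hq : Fintype.card F = q)
    (x : ℝ) (hx0 : 0 < x) (hx1 : x ≤ 1)
    (hlt : Real.exp 1 * (2 * (M : ℝ) - 1) * x ^ (-(d : ℤ)) * (q : ℝ) ^ (-(n : ℤ)) *
        ((1 + x * ((q : ℝ) - 1)) ^ (r + 1)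
          + ((q : ℝ) - 1) * (1 - x) ^ (r + 1)) ^ (n / (r + 1))
      < 1) :
    ∃ C : Finset (Fin (n / (r + 1)) × Fin (r + 1) → F), C.card = M ∧
      (∀ X ∈ C, ∀ Y ∈ C, X ≠ Y → d ≤ hammingDist X Y) ∧
      (∀ X ∈ C, ∀ i : Fin (n / (r + 1)),
        X (i, Fin.last r) = ∑ j : Fin r, X (i, j.castSucc)) ∧
      (∀ i : Fin (n / (r + 1)) × Fin (r + 1),
        ∃ R : Finset (Fin (n / (r + 1)) × Fin (r + 1)), i ∉ R ∧ R.card = r ∧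
          ∀ X ∈ C, ∀ Y ∈ C, X i ≠ Y i → ∃ l ∈ R, X l ≠ Y l) :=
  stmt_12_general q r n M d hrn hM hd F hq x hx0 hx1 hlt
end

section
/- Let C be a nonempty code of length n over a finite alphabet Q of size q ≥ 2 that is (s, L)-list decodable and r-locally recoverable. Then for every positive integer t with t·(r+1) ≤ n and q^(t·r) ≤ |C|, there exists a code C' of length n − t·(r+1) over Q that is (s, L)-list decodable and satisfies |C'| · q^(t·r) ≥ |C|. (This is the cardinality form of the bound k ≤ min over t of [t·r + k_L^(q)(n − t(r+1), s)].) -/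
/-- Locality-aware puncturing bound for list decodable codes
(cardinality form): an `(s, L)`-list decodable, `r`-locally recoverable code `C`
of length `n` over an alphabet of size `q ≥ 2` yields, for each positive `t` with
`t(r+1) ≤ n` and `q^{tr} ≤ |C|`, an `(s, L)`-list decodable code `C'` of length
`n - t(r+1)` with `|C'| · q^{tr} ≥ |C|`. -/
theorem stmt_13 (n q s L r : ℕ) (hq : 2 ≤ q)
    (Q : Type) [Fintype Q] [DecidableEq Q] (hcard : Fintype.card Q = q)
    (C : Finset (Fin n → Q)) (hC : C.Nonempty)
    (hlist : ∀ y : Fin n → Q, (C.filter (fun X => hammingDist X y ≤ s)).card ≤ L)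
    (hloc : ∀ i : Fin n, ∃ R : Finset (Fin n), i ∉ R ∧ R.card = r ∧
      ∀ X ∈ C, ∀ Y ∈ C, X i ≠ Y i → ∃ j ∈ R, X j ≠ Y j)
    (t : ℕ) (ht : 0 < t) (htn : t * (r + 1) ≤ n) (htC : q ^ (t * r) ≤ C.card) :
    ∃ C' : Finset (Fin (n - t * (r + 1)) → Q), C'.Nonempty ∧
      (∀ y : Fin (n - t * (r + 1)) → Q,
        (C'.filter (fun X => hammingDist X y ≤ s)).card ≤ L) ∧
      C.card ≤ C'.card * q ^ (t * r) := by
  classical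
  -- Step 1: greedily build a set S with a "determining" subset I.
  have key : ∀ k, k ≤ t → ∃ S I : Finset (Fin n), I ⊆ S ∧ I.card = k ∧
      S.card ≤ k * (r + 1) ∧
      ∀ X ∈ C, ∀ Y ∈ C, (∀ j ∈ S \ I, X j = Y j) → ∀ j ∈ S, X j = Y j := by
    intro k
    induction k with
    | zero => exact fun _ => ⟨∅, ∅, Finset.Subset.refl _, rfl, by simp, by simp⟩
    | succ k ih =>
      intro hk
      obtain ⟨S, I, hIS, hIcard, hScard, hdet⟩ := ih (Nat.le_of_succ_le hk)
      have hmul : (k + 1) * (r + 1) ≤ n :=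
        le_trans (Nat.mul_le_mul_right _ hk) htn
      have hlt : k * (r + 1) < (k + 1) * (r + 1) :=
        Nat.mul_lt_mul_of_pos_right (Nat.lt_succ_self k) (Nat.succ_pos r)
      have hSn : S.card < n := by omega
      obtain ⟨i, hiS⟩ : ∃ i, i ∉ S := by
        by_contra h
        push_neg at h
        have huniv : S = Finset.univ := Finset.eq_univ_iff_forall.mpr h
        rw [huniv, Finset.card_univ, Fintype.card_fin] at hSn
        omega
      obtain ⟨R, hiR, hRcard, hR⟩ := hloc i
      refine ⟨insert i (S ∪ R), insert i I, ?_, ?_, ?_, ?_⟩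
      · exact Finset.insert_subset_insert _ (hIS.trans Finset.subset_union_left)
      · rw [Finset.card_insert_of_notMem (fun h => hiS (hIS h)), hIcard]
      · have h1 := Finset.card_insert_le i (S ∪ R)
        have h2 := Finset.card_union_le S R
        have h3 : (k + 1) * (r + 1) = k * (r + 1) + (r + 1) := by ring
        omega
      · intro X hX Y hY hagree
        have hagreeS : ∀ j ∈ S, X j = Y j := by
          refine hdet X hX Y hY ?_
          intro j hj
          rw [Finset.mem_sdiff] at hj
          refine hagree j ?_
          rw [Finset.mem_sdiff, Finset.mem_insert, Finset.mem_insert,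
            Finset.mem_union]
          exact ⟨Or.inr (Or.inl hj.1),
            fun h => h.elim (fun he => hiS (he ▸ hj.1)) hj.2⟩
        have hXi : X i = Y i := by
          by_contra hne
          obtain ⟨j, hjR, hjne⟩ := hR X hX Y hY hne
          apply hjne
          by_cases hjS : j ∈ S
          · exact hagreeS j hjS
          · by_cases hjI : j ∈ I
            · exact hagreeS j (hIS hjI)
            · refine hagree j ?_
              rw [Finset.mem_sdiff, Finset.mem_insert, Finset.mem_insert,
                Finset.mem_union]
              exact ⟨Or.inr (Or.inr hjR),
                fun h => h.elim (fun he => hiR (he ▸ hjR)) hjI⟩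
        intro j hj
        rw [Finset.mem_insert, Finset.mem_union] at hj
        rcases hj with rfl | hj | hjR
        · exact hXi
        · exact hagreeS j hj
        · by_cases hjS : j ∈ S
          · exact hagreeS j hjS
          · by_cases hjI : j ∈ I
            · exact hagreeS j (hIS hjI)
            · refine hagree j ?_
              rw [Finset.mem_sdiff, Finset.mem_insert, Finset.mem_insert,
                Finset.mem_union]
              exact ⟨Or.inr (Or.inr hjR),
                fun h => h.elim (fun he => hiR (he ▸ hjR)) hjI⟩
  obtain ⟨S, I, hIS, hIcard, hScard, hdet⟩ := key t le_rfl
  -- Step 2: pad S to a set T of size exactly t*(r+1).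
  have hn' : t * (r + 1) ≤ (Finset.univ : Finset (Fin n)).card := by
    rw [Finset.card_univ, Fintype.card_fin]; exact htn
  obtain ⟨T, hST, _, hTcard⟩ :=
    Finset.exists_subsuperset_card_eq (Finset.subset_univ S) hScard hn'
  have hIT : I ⊆ T := hIS.trans hST
  have hdetT : ∀ X ∈ C, ∀ Y ∈ C, (∀ j ∈ T \ I, X j = Y j) → ∀ j ∈ T, X j = Y j := by
    intro X hX Y hY hagree
    have hagreeS : ∀ j ∈ S, X j = Y j :=
      hdet X hX Y hY fun j hj =>
        hagree j (Finset.sdiff_subset_sdiff hST (Finset.Subset.refl _) hj)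
    intro j hj
    by_cases hjI : j ∈ I
    · exact hagreeS j (hIS hjI)
    · exact hagree j (Finset.mem_sdiff.mpr ⟨hj, hjI⟩)
  have hTI : (T \ I).card = t * r := by
    rw [Finset.card_sdiff_of_subset hIT, hTcard, hIcard]
    have : t * (r + 1) = t * r + t := by ring
    omega
  -- Step 3: fiber over values on T \ I, take the largest fiber.
  have hQ : Nonempty Q := by
    rw [← Fintype.card_pos_iff, hcard]; omega
  let φ : (Fin n → Q) → ((T \ I : Finset (Fin n)) → Q) := fun X j => X j.1
  have hcardfun : Fintype.card ((T \ I : Finset (Fin n)) → Q) = q ^ (t * r) := by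
    rw [Fintype.card_fun, Fintype.card_coe, hTI, hcard]
  obtain ⟨a, haimg, hamax⟩ := Finset.exists_max_image (C.image φ)
    (fun b => (C.filter fun X => φ X = b).card) (hC.image φ)
  set C0 := C.filter (fun X => φ X = a) with hC0def
  have hC0sub : C0 ⊆ C := Finset.filter_subset _ _
  have hC0ne : C0.Nonempty := by
    obtain ⟨X, hXC, hXa⟩ := Finset.mem_image.mp haimg
    exact ⟨X, Finset.mem_filter.mpr ⟨hXC, hXa⟩⟩
  have hcount : C.card ≤ q ^ (t * r) * C0.card := by
    calc C.card = ∑ b ∈ C.image φ, (C.filter fun X => φ X = b).card :=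
          Finset.card_eq_sum_card_image φ C
      _ ≤ (C.image φ).card * C0.card := by
          have := Finset.sum_le_card_nsmul (C.image φ)
            (fun b => (C.filter fun X => φ X = b).card) C0.card hamax
          simpa using this
      _ ≤ q ^ (t * r) * C0.card := by
          refine Nat.mul_le_mul_right _ ?_
          rw [← hcardfun, ← Finset.card_univ]
          exact Finset.card_le_univ _
  have hagreeT : ∀ X ∈ C0, ∀ Y ∈ C0, ∀ j ∈ T, X j = Y j := by
    intro X hX Y hY
    rw [hC0def, Finset.mem_filter] at hX hY
    refine hdetT X hX.1 Y hY.1 ?_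
    intro j hj
    have h1 := congrFun hX.2 ⟨j, hj⟩
    have h2 := congrFun hY.2 ⟨j, hj⟩
    simpa [φ] using h1.trans h2.symm
  -- Step 4: puncture on the complement of T.
  have hTcompl : Tᶜ.card = n - t * (r + 1) := by
    rw [Finset.card_compl, hTcard, Fintype.card_fin]
  let E := Tᶜ.orderIsoOfFin hTcompl
  let e : Fin (n - t * (r + 1)) → Fin n := fun j => (E j : Fin n)
  have he_mem : ∀ j, e j ∈ Tᶜ := fun j => (E j).2
  have he_inj : Function.Injective e := fun a b h => E.injective (Subtype.ext h)
  have he_eq : ∀ (x : Fin n) (hx : x ∈ Tᶜ), e (E.symm ⟨x, hx⟩) = x := by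
    intro x hx
    show ((E (E.symm ⟨x, hx⟩)) : Fin n) = x
    rw [OrderIso.apply_symm_apply]
  have hinjOn : Set.InjOn (fun X : Fin n → Q => X ∘ e) ↑C0 := by
    intro X hX Y hY h
    funext j
    by_cases hj : j ∈ T
    · exact hagreeT X (Finset.mem_coe.mp hX) Y (Finset.mem_coe.mp hY) j hj
    · have hj' : j ∈ Tᶜ := Finset.mem_compl.mpr hj
      have hc := congrFun h (E.symm ⟨j, hj'⟩)
      simpa [Function.comp, he_eq j hj'] using hc
  refine ⟨C0.image (fun X => X ∘ e), hC0ne.image _, ?_, ?_⟩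
  · -- list decodability of the punctured code
    intro y'
    obtain ⟨X0, hX0⟩ := hC0ne
    set y : Fin n → Q :=
      fun j => if h : j ∈ Tᶜ then y' (E.symm ⟨j, h⟩) else X0 j with hydef
    have hy_e : ∀ i, y (e i) = y' i := by
      intro i
      have h := he_mem i
      rw [hydef]
      simp only [dif_pos h]
      congr 1
      have hsub : (⟨e i, h⟩ : {x // x ∈ Tᶜ}) = E i := Subtype.ext rfl
      rw [hsub, OrderIso.symm_apply_apply]
    have hy_T : ∀ j ∈ T, y j = X0 j := by
      intro j hj
      rw [hydef]
      exact dif_neg (fun h => (Finset.mem_compl.mp h) hj)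
    have hdist : ∀ X ∈ C0, hammingDist (X ∘ e) y' = hammingDist X y := by
      intro X hX
      show (Finset.univ.filter fun i => (X ∘ e) i ≠ y' i).card
          = (Finset.univ.filter fun j => X j ≠ y j).card
      apply Finset.card_bij (fun i _ => e i)
      · intro i hi
        simp only [Finset.mem_filter, Finset.mem_univ, true_and,
          Function.comp] at hi ⊢
        rw [hy_e i]; exact hi
      · intro i _ j _ h; exact he_inj h
      · intro j hj
        simp only [Finset.mem_filter, Finset.mem_univ, true_and] at hj
        have hjc : j ∈ Tᶜ := by
          by_contra h
          have hjT : j ∈ T := by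
            by_contra hT
            exact h (Finset.mem_compl.mpr hT)
          exact hj (by
            rw [hy_T j hjT]
            exact hagreeT X hX X0 hX0 j hjT)
        refine ⟨E.symm ⟨j, hjc⟩, ?_, he_eq j hjc⟩
        simp only [Finset.mem_filter, Finset.mem_univ, true_and, Function.comp]
        have h1 : y' (E.symm ⟨j, hjc⟩) = y j := by
          rw [← hy_e (E.symm ⟨j, hjc⟩), he_eq j hjc]
        rw [he_eq j hjc, h1]
        exact hj
    have himg : (C0.image (fun X => X ∘ e)).filter
        (fun X' => hammingDist X' y' ≤ s)
        = (C0.filter fun X => hammingDist (X ∘ e) y' ≤ s).image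
            (fun X => X ∘ e) := Finset.filter_image
    rw [himg, Finset.card_image_of_injOn
      (hinjOn.mono (Finset.coe_subset.mpr (Finset.filter_subset _ _)))]
    calc (C0.filter fun X => hammingDist (X ∘ e) y' ≤ s).card
        ≤ (C.filter fun X => hammingDist X y ≤ s).card := by
          refine Finset.card_le_card ?_
          intro X hX
          rw [Finset.mem_filter] at hX ⊢
          exact ⟨hC0sub hX.1, by rw [← hdist X hX.1]; exact hX.2⟩
      _ ≤ L := hlist y
  · -- cardinality bound
    rw [Finset.card_image_of_injOn hinjOn, mul_comm]
    exact hcount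
end

section
/- Let q be a prime power and r ≥ 1, k_o integers with 1 ≤ k_o ≤ q^r. Then there exists a code C ⊆ F_q^((r+1)·q^r) with exactly q^(k_o · r) codewords such that any two distinct codewords are at Hamming distance at least 2·(q^r − k_o + 1), and C is r-locally recoverable. (The code is the concatenation of an extended Reed–Solomon code of length q^r and dimension k_o over F_{q^r} with the q-ary single parity-check code of length r+1.) -/
set_option linter.unusedSectionVars false

open Finset Polynomial

section Aux

variable {F K : Type} [Field F] [Fintype F] [DecidableEq F]
  [Field K] [Fintype K] [DecidableEq K]

/-- Inner single-parity-check encoding of `K ≃ F^r` into `F^{r+1}`. -/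
noncomputable def innerEnc {r : ℕ} (φ : K ≃+ (Fin r → F)) (x : K) : Fin (r + 1) → F :=
  fun j => if h : (j : ℕ) < r then φ x ⟨j, h⟩ else - ∑ t, φ x t

lemma innerEnc_two {r : ℕ} (φ : K ≃+ (Fin r → F)) {x y : K} (hxy : x ≠ y) :
    ∃ j1 j2 : Fin (r + 1), j1 ≠ j2 ∧ innerEnc φ x j1 ≠ innerEnc φ y j1 ∧
      innerEnc φ x j2 ≠ innerEnc φ y j2 := by
  classical
  have hφ : φ x ≠ φ y := fun h => hxy (φ.injective h)
  set T : Finset (Fin r) := univ.filter fun t => φ x t ≠ φ y t with hT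
  have hTne : T.Nonempty := by
    by_contra h
    apply hφ
    funext t
    by_contra ht
    exact h ⟨t, by simp [hT, ht]⟩
  obtain ⟨t0, ht0⟩ := hTne
  have ht0' : φ x t0 ≠ φ y t0 := by simpa [hT] using ht0
  by_cases hs : (∑ t, φ x t) = ∑ t, φ y t
  · -- sums equal: T has at least two elements
    have hsum0 : ∑ t ∈ T, (φ x t - φ y t) = 0 := by
      rw [Finset.sum_subset (Finset.subset_univ T)]
      · rw [Finset.sum_sub_distrib, hs, sub_self]
      · intro t _ ht
        have : ¬ φ x t ≠ φ y t := by simpa [hT] using ht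
        simp [not_not.mp this]
    have hcard : 1 < T.card := by
      rcases Nat.lt_or_ge 1 T.card with h | h
      · exact h
      · exfalso
        have hc1 : T.card = 1 := le_antisymm h (Finset.card_pos.mpr ⟨t0, ht0⟩)
        obtain ⟨t, ht⟩ := Finset.card_eq_one.mp hc1
        rw [ht, Finset.sum_singleton] at hsum0
        have ht0t : t0 = t := by simpa using (ht ▸ ht0 : t0 ∈ ({t} : Finset (Fin r)))
        exact ht0' (ht0t ▸ (by rwa [sub_eq_zero] at hsum0))
    obtain ⟨t1, ht1, t2, ht2, ht12⟩ := Finset.one_lt_card.mp hcard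
    refine ⟨t1.castSucc, t2.castSucc, by simpa using ht12, ?_, ?_⟩
    · have h1 : φ x t1 ≠ φ y t1 := by simpa [hT] using ht1
      simpa [innerEnc, t1.isLt] using h1
    · have h2 : φ x t2 ≠ φ y t2 := by simpa [hT] using ht2
      simpa [innerEnc, t2.isLt] using h2
  · -- sums differ: use t0 and the last coordinate
    refine ⟨t0.castSucc, Fin.last r, (Fin.castSucc_lt_last t0).ne, ?_, ?_⟩
    · simpa [innerEnc, t0.isLt] using ht0'
    · simp only [innerEnc, Fin.val_last, lt_irrefl, dif_neg, not_lt.mpr le_rfl]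
      simpa using hs

lemma innerEnc_dist {r : ℕ} (φ : K ≃+ (Fin r → F)) {x y : K} (hxy : x ≠ y) :
    2 ≤ (univ.filter fun j => innerEnc φ x j ≠ innerEnc φ y j).card := by
  classical
  obtain ⟨j1, j2, h12, h1, h2⟩ := innerEnc_two φ hxy
  exact Finset.one_lt_card.mpr ⟨j1, by simp [h1], j2, by simp [h2], h12⟩

lemma innerEnc_local {r : ℕ} (φ : K ≃+ (Fin r → F)) {x y : K} {j : Fin (r + 1)}
    (h : innerEnc φ x j ≠ innerEnc φ y j) :
    ∃ j' : Fin (r + 1), j' ≠ j ∧ innerEnc φ x j' ≠ innerEnc φ y j' := by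
  classical
  have hxy : x ≠ y := fun he => h (by rw [he])
  obtain ⟨j', hj', hne⟩ := Finset.exists_mem_ne
    (lt_of_lt_of_le one_lt_two (innerEnc_dist φ hxy)) j
  exact ⟨j', hne, by simpa using hj'⟩

/-- The message polynomial. -/
noncomputable def msgPoly {ko : ℕ} (a : Fin ko → K) : Polynomial K :=
  ∑ i : Fin ko, C (a i) * X ^ (i : ℕ)

lemma msgPoly_coeff {ko : ℕ} (a : Fin ko → K) (i : Fin ko) :
    (msgPoly a).coeff (i : ℕ) = a i := by
  classical
  rw [msgPoly, Polynomial.finset_sum_coeff]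
  rw [Finset.sum_eq_single i]
  · simp
  · intro b _ hbi
    have : (i : ℕ) ≠ (b : ℕ) := fun h => hbi (Fin.ext h.symm)
    simp [Polynomial.coeff_C_mul, Polynomial.coeff_X_pow, this]
  · simp

lemma msgPoly_natDegree_le {ko : ℕ} (a : Fin ko → K) : (msgPoly a).natDegree ≤ ko - 1 := by
  classical
  apply Polynomial.natDegree_sum_le_of_forall_le
  intro i _
  exact (Polynomial.natDegree_C_mul_X_pow_le (a i) (i : ℕ)).trans (by have := i.isLt; omega)

lemma outer_root_bound {ko : ℕ} {a b : Fin ko → K} (hab : a ≠ b) :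
    (univ.filter fun s : K => eval s (msgPoly a) = eval s (msgPoly b)).card ≤ ko - 1 := by
  classical
  set g : Polynomial K := msgPoly a - msgPoly b with hg
  have hg0 : g ≠ 0 := by
    intro h0
    apply hab
    funext i
    have := congrArg (fun p => Polynomial.coeff p (i : ℕ)) h0
    simpa [hg, msgPoly_coeff, sub_eq_zero] using this
  have hdeg : g.natDegree ≤ ko - 1 :=
    (Polynomial.natDegree_sub_le _ _).trans (by
      simp only [max_le_iff]
      exact ⟨msgPoly_natDegree_le a, msgPoly_natDegree_le b⟩)
  have hsub : (univ.filter fun s : K => eval s (msgPoly a) = eval s (msgPoly b)) ⊆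
      g.roots.toFinset := by
    intro s hs
    rw [Finset.mem_filter] at hs
    rw [Multiset.mem_toFinset, Polynomial.mem_roots hg0]
    simp [hg, Polynomial.IsRoot, hs.2]
  calc (univ.filter fun s : K => eval s (msgPoly a) = eval s (msgPoly b)).card
      ≤ g.roots.toFinset.card := Finset.card_le_card hsub
    _ ≤ Multiset.card g.roots := Multiset.toFinset_card_le _
    _ ≤ g.natDegree := Polynomial.card_roots' g
    _ ≤ ko - 1 := hdeg

lemma card_filter_equiv {α β : Type} [Fintype α] [Fintype β] [DecidableEq α] [DecidableEq β]
    (e : α ≃ β) (P : β → Prop) [DecidablePred P] :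
    (univ.filter fun a => P (e a)).card = (univ.filter P).card := by
  classical
  apply Finset.card_bij (fun a _ => e a)
  · intro a ha
    simp only [Finset.mem_filter, Finset.mem_univ, true_and] at ha ⊢
    exact ha
  · intro a ha a' ha' h
    exact e.injective h
  · intro b hb
    refine ⟨e.symm b, ?_, by simp⟩
    simp only [Finset.mem_filter, Finset.mem_univ, true_and] at hb ⊢
    simpa using hb

lemma card_filter_prod {α β : Type} [Fintype α] [Fintype β] (P : α × β → Prop) [DecidablePred P] :
    (univ.filter P).card = ∑ b : β, (univ.filter fun a => P (a, b)).card := by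
  classical
  rw [Finset.card_filter]
  rw [Fintype.sum_prod_type_right]
  congr 1
  funext b
  rw [Finset.card_filter]

end Aux




/-- Concatenation of an extended Reed–Solomon code (length `q^r`,
dimension `k_o` over `F_{q^r}`) with the `q`-ary single parity-check code of length
`r+1` gives a code of length `(r+1)·q^r` with `q^{k_o r}` codewords, minimum distance
at least `2(q^r - k_o + 1)`, and locality `r`. -/
theorem stmt_14 (q r ko : ℕ) (hr : 1 ≤ r) (hko1 : 1 ≤ ko) (hko2 : ko ≤ q ^ r)
    (F : Type) [Field F] [Fintype F] [DecidableEq F] (hq : Fintype.card F = q) :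
    ∃ C : Finset (Fin ((r + 1) * q ^ r) → F), C.card = q ^ (ko * r) ∧
      (∀ X ∈ C, ∀ Y ∈ C, X ≠ Y → 2 * (q ^ r - ko + 1) ≤ hammingDist X Y) ∧
      (∀ i : Fin ((r + 1) * q ^ r), ∃ R : Finset (Fin ((r + 1) * q ^ r)),
        i ∉ R ∧ R.card = r ∧
        ∀ X ∈ C, ∀ Y ∈ C, X i ≠ Y i → ∃ l ∈ R, X l ≠ Y l) := by
  classical
  set p := ringChar F with hpdef
  haveI hp : Fact p.Prime := ⟨CharP.char_is_prime F p⟩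
  letI : Algebra (ZMod p) F := ZMod.algebra F p
  set m := Module.finrank (ZMod p) F with hmdef
  have hFm : q = p ^ m := by
    rw [← hq]
    have := Module.card_eq_pow_finrank (K := ZMod p) (V := F)
    rwa [ZMod.card] at this
  have hm1 : 1 ≤ m := by
    by_contra h
    have hm0 : m = 0 := by omega
    rw [hm0, pow_zero] at hFm
    have := Fintype.one_lt_card (α := F)
    omega
  set K := GaloisField p (m * r) with hKdef
  letI : Fintype K := Fintype.ofFinite K
  have hmr0 : m * r ≠ 0 := by positivity
  have hKcard : Fintype.card K = q ^ r := by
    have h := GaloisField.card p (m * r) hmr0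
    rw [Nat.card_eq_fintype_card] at h
    rw [h, hFm, ← pow_mul]
  have hfrK : Module.finrank (ZMod p) K = m * r := by
    have h1 : Fintype.card K = p ^ Module.finrank (ZMod p) K := by
      have := Module.card_eq_pow_finrank (K := ZMod p) (V := K)
      rwa [ZMod.card] at this
    have h2 : p ^ Module.finrank (ZMod p) K = p ^ (m * r) := by
      rw [← h1, hKcard, hFm, ← pow_mul]
    exact Nat.pow_right_injective hp.out.two_le h2
  have hfrF : Module.finrank (ZMod p) (Fin r → F) = m * r := by
    rw [Module.finrank_pi_fintype]
    rw [Finset.sum_const, Finset.card_univ, Fintype.card_fin, smul_eq_mul, ← hmdef, mul_comm]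
  have he : Nonempty (K ≃ₗ[ZMod p] (Fin r → F)) :=
    FiniteDimensional.nonempty_linearEquiv_of_finrank_eq (hfrK.trans hfrF.symm)
  obtain ⟨e⟩ := he
  set φ : K ≃+ (Fin r → F) := e.toAddEquiv with hφdef
  set eK : Fin (q ^ r) ≃ K := (Fintype.equivFinOfCardEq hKcard).symm with heKdef
  set eP : Fin (r + 1) × Fin (q ^ r) ≃ Fin ((r + 1) * q ^ r) := finProdFinEquiv with hePdef
  -- the concatenated encoding
  set Enc : (Fin ko → K) → (Fin ((r + 1) * q ^ r) → F) := fun a i =>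
    innerEnc φ (eval (eK (eP.symm i).2) (msgPoly a)) (eP.symm i).1 with hEncdef
  have hEnc : ∀ (a : Fin ko → K) (j : Fin (r + 1)) (s : Fin (q ^ r)),
      Enc a (eP (j, s)) = innerEnc φ (eval (eK s) (msgPoly a)) j := by
    intro a j s
    simp [hEncdef]
  -- distance bound
  have hdist : ∀ a b : Fin ko → K, a ≠ b →
      2 * (q ^ r - ko + 1) ≤ hammingDist (Enc a) (Enc b) := by
    intro a b hab
    have h0 : hammingDist (Enc a) (Enc b)
        = (univ.filter fun i => Enc a i ≠ Enc b i).card := rfl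
    have h1 : (univ.filter fun pp : Fin (r + 1) × Fin (q ^ r) =>
          Enc a (eP pp) ≠ Enc b (eP pp)).card
        = (univ.filter fun i => Enc a i ≠ Enc b i).card :=
      card_filter_equiv eP (fun i => Enc a i ≠ Enc b i)
    have h2 : (univ.filter fun pp : Fin (r + 1) × Fin (q ^ r) =>
          Enc a (eP pp) ≠ Enc b (eP pp)).card
        = ∑ s : Fin (q ^ r), (univ.filter fun j : Fin (r + 1) =>
            Enc a (eP (j, s)) ≠ Enc b (eP (j, s))).card :=
      card_filter_prod _
    set D : Finset (Fin (q ^ r)) :=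
      univ.filter fun s => eval (eK s) (msgPoly a) ≠ eval (eK s) (msgPoly b) with hDdef
    have hDcard : q ^ r - ko + 1 ≤ D.card := by
      have hB : (univ.filter fun s : Fin (q ^ r) =>
          eval (eK s) (msgPoly a) = eval (eK s) (msgPoly b)).card ≤ ko - 1 := by
        have := card_filter_equiv eK
          (fun t : K => eval t (msgPoly a) = eval t (msgPoly b))
        rw [this]
        exact outer_root_bound hab
      have hsplit := Finset.card_filter_add_card_filter_not
        (s := (univ : Finset (Fin (q ^ r))))
        (p := fun s => eval (eK s) (msgPoly a) = eval (eK s) (msgPoly b))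
      rw [Finset.card_univ, Fintype.card_fin] at hsplit
      have hDeq : D.card = (univ.filter fun s : Fin (q ^ r) =>
          ¬ eval (eK s) (msgPoly a) = eval (eK s) (msgPoly b)).card := by
        rw [hDdef]
      omega
    have hterm : ∀ s ∈ D, 2 ≤ (univ.filter fun j : Fin (r + 1) =>
        Enc a (eP (j, s)) ≠ Enc b (eP (j, s))).card := by
      intro s hs
      have hne : eval (eK s) (msgPoly a) ≠ eval (eK s) (msgPoly b) := by
        simpa [hDdef] using hs
      calc 2 ≤ (univ.filter fun j : Fin (r + 1) =>
            innerEnc φ (eval (eK s) (msgPoly a)) j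
              ≠ innerEnc φ (eval (eK s) (msgPoly b)) j).card := innerEnc_dist φ hne
        _ = _ := by
            congr 1
            apply Finset.filter_congr
            intro j _
            rw [hEnc, hEnc]
    calc 2 * (q ^ r - ko + 1) ≤ 2 * D.card := by omega
      _ = ∑ _s ∈ D, 2 := by rw [Finset.sum_const, smul_eq_mul, mul_comm]
      _ ≤ ∑ s ∈ D, (univ.filter fun j : Fin (r + 1) =>
            Enc a (eP (j, s)) ≠ Enc b (eP (j, s))).card := Finset.sum_le_sum hterm
      _ ≤ ∑ s : Fin (q ^ r), (univ.filter fun j : Fin (r + 1) =>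
            Enc a (eP (j, s)) ≠ Enc b (eP (j, s))).card :=
          Finset.sum_le_sum_of_subset (Finset.subset_univ D)
      _ = hammingDist (Enc a) (Enc b) := by rw [← h2, h1, ← h0]
  have hinj : Function.Injective Enc := by
    intro a b hEq
    by_contra hab
    have h2 := hdist a b hab
    rw [hEq, hammingDist_self] at h2
    omega
  refine ⟨(univ : Finset (Fin ko → K)).image Enc, ?_, ?_, ?_⟩
  · rw [Finset.card_image_of_injective _ hinj, Finset.card_univ, Fintype.card_fun,
      hKcard, Fintype.card_fin, ← pow_mul, mul_comm]
  · rintro X hX Y hY hXY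
    obtain ⟨a, -, rfl⟩ := Finset.mem_image.mp hX
    obtain ⟨b, -, rfl⟩ := Finset.mem_image.mp hY
    exact hdist a b (fun h => hXY (by rw [h]))
  · intro i
    set j : Fin (r + 1) := (eP.symm i).1 with hjdef
    set s : Fin (q ^ r) := (eP.symm i).2 with hsdef
    have hi : eP (j, s) = i := by
      rw [hjdef, hsdef]
      exact eP.apply_symm_apply i
    refine ⟨(univ.erase j).image (fun j' => eP (j', s)), ?_, ?_, ?_⟩
    · intro hmem
      obtain ⟨j', hj', hj'i⟩ := Finset.mem_image.mp hmem
      rw [← hi] at hj'i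
      have : (j', s) = (j, s) := eP.injective hj'i
      exact (Finset.mem_erase.mp hj').1 (by simpa using congrArg Prod.fst this)
    · have hinj2 : Function.Injective (fun j' : Fin (r + 1) => eP (j', s)) := by
        intro u v huv
        simpa using congrArg Prod.fst (eP.injective huv)
      rw [Finset.card_image_of_injective _ hinj2, Finset.card_erase_of_mem (Finset.mem_univ j),
        Finset.card_univ, Fintype.card_fin]
      omega
    · rintro X hX Y hY hXYi
      obtain ⟨a, -, rfl⟩ := Finset.mem_image.mp hX
      obtain ⟨b, -, rfl⟩ := Finset.mem_image.mp hY
      rw [← hi, hEnc, hEnc] at hXYi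
      obtain ⟨j', hj'ne, hj'⟩ := innerEnc_local φ hXYi
      refine ⟨eP (j', s), Finset.mem_image.mpr ⟨j', Finset.mem_erase.mpr ⟨hj'ne, Finset.mem_univ _⟩, rfl⟩, ?_⟩
      rw [hEnc, hEnc]
      exact hj'
end
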